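/- arXiv:2109.06086 — 5 statements merged into one kernel-verified Lean document; each statement's English description precedes it below -/
import Mathlib

section
/- (Symbol by block replacement.) Let Σ₀ be a set of symbols and for each σ ∈ Σ₀ let A_σ be a string of length L over an alphabet Σ. Let a₁a₂⋯a_n and b₁b₂⋯b_m be strings over Σ₀. Assume α ∈ (0, 1/7), R ≥ 2, and that for all σ ≠ σ′ in Σ₀ and all substrings C of A_σ and D of A_{σ′} with |C|, |D| ≥ L/R, one has f̄(C,D) ≥ α. Then f̄(A_{a₁}A_{a₂}⋯A_{a_n}, A_{b₁}A_{b₂}⋯A_{b_m}) > α · f̄(a₁a₂⋯a_n, b₁b₂⋯b_m) − 1/R. -/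
/-- A match between two strings of symbols: a list of pairs of indices, strictly
increasing in both coordinates, pairing equal symbols. -/
def IsMatch {α : Type*} (a b : List α) (M : List (ℕ × ℕ)) : Prop :=
  M.Chain' (fun p q => p.1 < q.1 ∧ p.2 < q.2) ∧
    ∀ p ∈ M, p.1 < a.length ∧ p.2 < b.length ∧ a[p.1]? = b[p.2]?

/-- The `f̄`-distance between two strings of symbols:
`f̄(a,b) = 1 - 2·sup{|M| : M a match between a and b}/(|a|+|b|)`. -/
noncomputable def fbar {α : Type*} (a b : List α) : ℝ :=
  1 - 2 * ((sSup {r : ℕ | ∃ M : List (ℕ × ℕ), IsMatch a b M ∧ M.length = r} : ℕ) : ℝ) /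
    ((a.length : ℝ) + (b.length : ℝ))

namespace Stmt7Aux

open List

abbrev Rlt : ℕ × ℕ → ℕ × ℕ → Prop := fun p q => p.1 < q.1 ∧ p.2 < q.2

instance : IsTrans (ℕ × ℕ) Rlt := ⟨fun _ _ _ h1 h2 => ⟨h1.1.trans h2.1, h1.2.trans h2.2⟩⟩

lemma isMatch_nil {α : Type*} (a b : List α) : IsMatch a b [] :=
  ⟨List.isChain_nil, fun p hp => absurd hp List.not_mem_nil⟩

lemma isMatch_pairwise {α : Type*} {a b : List α} {M : List (ℕ × ℕ)} (h : IsMatch a b M) :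
    M.Pairwise Rlt := List.isChain_iff_pairwise.mp h.1

lemma length_le_of_mono {l : List (ℕ × ℕ)} (g : ℕ × ℕ → ℕ)
    (hp : l.Pairwise fun p q => g p < g q) {lo hi : ℕ}
    (hb : ∀ p ∈ l, lo ≤ g p ∧ g p < hi) : l.length ≤ hi - lo := by
  classical
  have hnd : (l.map g).Nodup := (hp.map g (fun a b h => h)).nodup
  have hsub : (l.map g).toFinset ⊆ Finset.Ico lo hi := by
    intro x hx
    simp only [List.mem_toFinset, List.mem_map] at hx
    obtain ⟨p, hpmem, rfl⟩ := hx
    exact Finset.mem_Ico.mpr ⟨(hb p hpmem).1, (hb p hpmem).2⟩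
  calc l.length = (l.map g).length := (l.length_map g).symm
    _ = (l.map g).toFinset.card := (List.toFinset_card_of_nodup hnd).symm
    _ ≤ (Finset.Ico lo hi).card := Finset.card_le_card hsub
    _ = hi - lo := Nat.card_Ico lo hi

lemma isMatch_length_le_left {α : Type*} {a b : List α} {M : List (ℕ × ℕ)}
    (h : IsMatch a b M) : M.length ≤ a.length := by
  have := length_le_of_mono Prod.fst ((isMatch_pairwise h).imp (fun hpq => hpq.1))
    (lo := 0) (hi := a.length) (fun p hp => ⟨Nat.zero_le _, (h.2 p hp).1⟩)
  omega

lemma matchSet_zero_mem {α : Type*} (a b : List α) :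
    0 ∈ {r : ℕ | ∃ M : List (ℕ × ℕ), IsMatch a b M ∧ M.length = r} :=
  ⟨[], isMatch_nil a b, rfl⟩

lemma matchSet_bdd {α : Type*} (a b : List α) :
    BddAbove {r : ℕ | ∃ M : List (ℕ × ℕ), IsMatch a b M ∧ M.length = r} :=
  ⟨a.length, fun r ⟨M, hM, hr⟩ => hr ▸ isMatch_length_le_left hM⟩

lemma le_matchSup {α : Type*} {a b : List α} {M : List (ℕ × ℕ)} (h : IsMatch a b M) :
    M.length ≤ sSup {r : ℕ | ∃ M : List (ℕ × ℕ), IsMatch a b M ∧ M.length = r} :=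
  le_csSup (matchSet_bdd a b) ⟨M, h, rfl⟩

lemma fbar_le_one {α : Type*} (a b : List α) : fbar a b ≤ 1 := by
  have h : (0:ℝ) ≤ 2 * ((sSup {r : ℕ | ∃ M : List (ℕ × ℕ), IsMatch a b M ∧ M.length = r} : ℕ) : ℝ) /
      ((a.length : ℝ) + (b.length : ℝ)) := by positivity
  simp only [fbar]; linarith

lemma fbar_eq_one_of_nil {α : Type*} {a : List α} (b : List α)
    (h : a = [] ∨ b = []) : fbar a b = 1 := by
  have hset : ∀ r ∈ {r : ℕ | ∃ M : List (ℕ × ℕ), IsMatch a b M ∧ M.length = r}, r = 0 := by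
    rintro r ⟨M, hM, rfl⟩
    match M with
    | [] => rfl
    | p :: M' =>
      exfalso
      have := hM.2 p (List.mem_cons_self)
      rcases h with rfl | rfl
      · exact absurd this.1 (by simp)
      · exact absurd this.2.1 (by simp)
  have hsup : sSup {r : ℕ | ∃ M : List (ℕ × ℕ), IsMatch a b M ∧ M.length = r} = 0 :=
    Nat.le_antisymm (csSup_le ⟨0, matchSet_zero_mem a b⟩ (fun r hr => (hset r hr).le)) (Nat.zero_le _)
  simp [fbar, hsup]

lemma div_block {L : ℕ} (hL0 : 0 < L) {x i : ℕ} (h : x / L = i) :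
    L * i ≤ x ∧ x < L * i + L := by
  have h1 := Nat.div_add_mod x L
  have h2 := Nat.mod_lt x hL0
  rw [h] at h1
  omega

lemma length_flatMap_const {Γ₀ Γ : Type*} {L : ℕ} {A : Γ₀ → List Γ}
    (hL : ∀ σ, (A σ).length = L) (a : List Γ₀) : (a.flatMap A).length = L * a.length := by
  induction a with
  | nil => simp
  | cons c a ih => simp [ih, hL c]; ring

lemma getElem?_flatMap_const {Γ₀ Γ : Type*} {L : ℕ} {A : Γ₀ → List Γ}
    (hL : ∀ σ, (A σ).length = L) (hL0 : 0 < L) (a : List Γ₀) :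
    ∀ {t : ℕ} {σ : Γ₀}, a[t / L]? = some σ → (a.flatMap A)[t]? = (A σ)[t % L]? := by
  induction a with
  | nil => intro t σ hσ; simp at hσ
  | cons c a ih =>
    intro t σ hσ
    rw [List.flatMap_cons]
    by_cases ht : t < L
    · have h0 : t / L = 0 := Nat.div_eq_of_lt ht
      rw [h0] at hσ
      simp only [List.getElem?_cons_zero, Option.some.injEq] at hσ
      subst hσ
      rw [List.getElem?_append_left (by rw [hL c]; exact ht), Nat.mod_eq_of_lt ht]
    · push_neg at ht
      rw [List.getElem?_append_right (by rw [hL c]; exact ht), hL c]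
      have hdiv : t / L = (t - L) / L + 1 := Nat.div_eq_sub_div hL0 ht
      have hmod : t % L = (t - L) % L := Nat.mod_eq_sub_mod ht
      rw [hmod]
      apply ih
      rw [hdiv] at hσ
      simpa using hσ

lemma mem_rel_getLast {β : Type*} {R : β → β → Prop} :
    ∀ (xs : List β) (h : xs ≠ []), xs.Pairwise R → ∀ {x}, x ∈ xs →
      x = xs.getLast h ∨ R x (xs.getLast h) := by
  intro xs
  induction xs with
  | nil => intro h; exact absurd rfl h
  | cons y ys ih =>
    intro h hpw x hx
    rcases eq_or_ne ys [] with rfl | hys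
    · left
      simp only [List.mem_singleton] at hx
      simp [hx]
    · rw [List.getLast_cons hys]
      rcases List.mem_cons.mp hx with rfl | hx'
      · exact Or.inr ((List.pairwise_cons.mp hpw).1 _ (List.getLast_mem hys))
      · exact ih hys (List.pairwise_cons.mp hpw).2 hx'

lemma pairwise_mem_trichotomy {β : Type*} {R : β → β → Prop} {l : List β}
    (h : l.Pairwise R) {x y : β} (hx : x ∈ l) (hy : y ∈ l) : x = y ∨ R x y ∨ R y x := by
  obtain ⟨i, hi, rfl⟩ := List.mem_iff_getElem.mp hx
  obtain ⟨j, hj, rfl⟩ := List.mem_iff_getElem.mp hy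
  rcases lt_trichotomy i j with hij | rfl | hij
  · exact Or.inr (Or.inl (List.pairwise_iff_getElem.mp h _ _ hi hj hij))
  · exact Or.inl rfl
  · exact Or.inr (Or.inr (List.pairwise_iff_getElem.mp h _ _ hj hi hij))

abbrev E : Type := (ℕ × ℕ) × (ℕ × ℕ) × ℕ

def EnR : E → E → Prop := fun e e' => e.2.1.1 < e'.1.1 ∧ e.2.1.2 < e'.1.2

def Good {Γ₀ : Type*} (L : ℕ) (a b : List Γ₀) (e : E) : Prop :=
  e.1.1 ≤ e.2.1.1 ∧ e.1.2 ≤ e.2.1.2 ∧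
  e.2.1.1 / L = e.1.1 / L ∧ e.2.1.2 / L = e.1.2 / L ∧
  e.2.2 ≤ e.2.1.1 - e.1.1 + 1 ∧ e.2.2 ≤ e.2.1.2 - e.1.2 + 1 ∧
  e.1.1 / L < a.length ∧ e.1.2 / L < b.length ∧ a[e.1.1 / L]? = b[e.1.2 / L]?

lemma tele (F G W : E → ℕ) :
    ∀ (P : List E) (lo hi : ℕ), P.Pairwise (fun e e' => G e < F e') →
      (∀ e ∈ P, F e ≤ G e ∧ W e ≤ G e - F e + 1 ∧ lo ≤ F e ∧ G e < hi) →
      (P.map W).sum ≤ hi - lo := by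
  intro P
  induction P with
  | nil => intro lo hi _ _; simp
  | cons e P ih =>
    intro lo hi hpw hb
    obtain ⟨hfg, hw, hlo, hhi⟩ := hb e (List.mem_cons_self)
    have hpc := List.pairwise_cons.mp hpw
    have hrec := ih (G e + 1) hi hpc.2 (fun e' he' =>
      ⟨(hb e' (List.mem_cons_of_mem _ he')).1, (hb e' (List.mem_cons_of_mem _ he')).2.1,
        hpc.1 e' he', (hb e' (List.mem_cons_of_mem _ he')).2.2.2⟩)
    simp only [List.map_cons, List.sum_cons]
    omega


lemma lemB {Γ₀ : Type*} (L : ℕ) (hL0 : 0 < L) (a b : List Γ₀) :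
    ∀ (N : ℕ) (P : List E), P.length ≤ N → P.Pairwise EnR → (∀ e ∈ P, Good L a b e) →
      ∃ W : List (ℕ × ℕ), IsMatch a b W ∧
        (∀ q ∈ W, ∃ e ∈ P, q = (e.1.1 / L, e.1.2 / L)) ∧
        (P.map (fun e => e.2.2)).sum ≤ L * W.length := by
  intro N
  induction N with
  | zero =>
    intro P hP _ _
    have : P = [] := List.length_eq_zero_iff.mp (Nat.le_zero.mp hP)
    subst this
    exact ⟨[], isMatch_nil a b, by simp, by simp⟩
  | succ N ih =>
    intro P hlen hpw hgood
    match P with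
    | [] => exact ⟨[], isMatch_nil a b, by simp, by simp⟩
    | e₀ :: P₁ =>
      classical
      set i₀ := e₀.1.1 / L with hi₀
      set j₀ := e₀.1.2 / L with hj₀
      set pred : E → Bool := fun e => decide (e.1.1 / L = i₀ ∨ e.1.2 / L = j₀) with hpreddef
      set Q := P₁.takeWhile pred with hQdef
      set P' := P₁.dropWhile pred with hP'def
      have hsplit : P₁ = Q ++ P' := (List.takeWhile_append_dropWhile (p := pred) (l := P₁)).symm
      have hpw₁ : P₁.Pairwise EnR := (List.pairwise_cons.mp hpw).2
      have h0 : ∀ e ∈ P₁, EnR e₀ e := (List.pairwise_cons.mp hpw).1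
      have hQsub : ∀ e ∈ Q, e ∈ P₁ := fun e he => (List.takeWhile_sublist pred).subset he
      have hP'sub : ∀ e ∈ P', e ∈ P₁ := fun e he => (List.dropWhile_sublist pred).subset he
      have hQpred : ∀ e ∈ Q, e.1.1 / L = i₀ ∨ e.1.2 / L = j₀ := fun e he => by
        have := List.mem_takeWhile_imp he
        simpa [hpreddef] using this
      have hgood₀ := hgood e₀ (List.mem_cons_self)
      have hblocks : ∀ e ∈ P₁, i₀ ≤ e.1.1 / L ∧ j₀ ≤ e.1.2 / L := by
        intro e he
        have h := h0 e he
        constructor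
        · calc i₀ = e₀.2.1.1 / L := hgood₀.2.2.1.symm
            _ ≤ e.1.1 / L := Nat.div_le_div_right h.1.le
        · calc j₀ = e₀.2.1.2 / L := hgood₀.2.2.2.1.symm
            _ ≤ e.1.2 / L := Nat.div_le_div_right h.2.le
      -- dichotomy for Q
      have hdich : (∀ e ∈ Q, e.1.1 / L = i₀) ∨ (∀ e ∈ Q, e.1.2 / L = j₀) := by
        by_cases hall : ∀ e ∈ Q, e.1.1 / L = i₀
        · exact Or.inl hall
        · right
          push_neg at hall
          obtain ⟨es, hes, hies⟩ := hall
          have hjes : es.1.2 / L = j₀ := (hQpred _ hes).resolve_left hies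
          intro e' he'
          by_contra hj'
          have hi' : e'.1.1 / L = i₀ := (hQpred _ he').resolve_right hj'
          have hQpw : Q.Pairwise EnR := hpw₁.sublist (List.takeWhile_sublist pred)
          have hiesgt : i₀ < es.1.1 / L :=
            lt_of_le_of_ne (hblocks _ (hQsub _ hes)).1 (Ne.symm hies)
          have hj'gt : j₀ < e'.1.2 / L :=
            lt_of_le_of_ne (hblocks _ (hQsub _ he')).2 (Ne.symm hj')
          rcases pairwise_mem_trichotomy hQpw hes he' with heq | h1 | h2
          · rw [heq] at hjes; omega
          · -- EnR es e' : es.2.1.1 < e'.1.1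
            have : es.1.1 / L ≤ e'.1.1 / L := by
              calc es.1.1 / L = es.2.1.1 / L := ((hgood _ (List.mem_cons_of_mem _ (hQsub _ hes))).2.2.1).symm
                _ ≤ e'.1.1 / L := Nat.div_le_div_right h1.1.le
            omega
          · -- EnR e' es : e'.2.1.2 < es.1.2
            have : e'.1.2 / L ≤ es.1.2 / L := by
              calc e'.1.2 / L = e'.2.1.2 / L := ((hgood _ (List.mem_cons_of_mem _ (hQsub _ he'))).2.2.2.1).symm
                _ ≤ es.1.2 / L := Nat.div_le_div_right h2.2.le
            omega
      -- sum over e₀ :: Q is at most L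
      have hsumQ : (((e₀ :: Q).map (fun e => e.2.2)).sum) ≤ L := by
        have hQpw' : (e₀ :: Q).Pairwise EnR :=
          hpw.sublist ((List.takeWhile_sublist pred).cons₂ e₀)
        rcases hdich with hcase | hcase
        · have hb : ∀ e ∈ e₀ :: Q, e.1.1 ≤ e.2.1.1 ∧ e.2.2 ≤ e.2.1.1 - e.1.1 + 1 ∧
              L * i₀ ≤ e.1.1 ∧ e.2.1.1 < L * i₀ + L := by
            intro e he
            have heP : e ∈ e₀ :: P₁ := by
              rcases List.mem_cons.mp he with rfl | h
              · exact List.mem_cons_self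
              · exact List.mem_cons_of_mem _ (hQsub _ h)
            have hg := hgood e heP
            have hei : e.1.1 / L = i₀ := by
              rcases List.mem_cons.mp he with rfl | h
              · rfl
              · exact hcase e h
            have h1 := div_block hL0 hei
            have h2 := div_block hL0 (hg.2.2.1.trans hei)
            exact ⟨hg.1, hg.2.2.2.2.1, h1.1, h2.2⟩
          have := tele (fun e => e.1.1) (fun e => e.2.1.1) (fun e => e.2.2) (e₀ :: Q)
            (L * i₀) (L * i₀ + L) (hQpw'.imp (fun h => h.1)) hb
          omega
        · have hb : ∀ e ∈ e₀ :: Q, e.1.2 ≤ e.2.1.2 ∧ e.2.2 ≤ e.2.1.2 - e.1.2 + 1 ∧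
              L * j₀ ≤ e.1.2 ∧ e.2.1.2 < L * j₀ + L := by
            intro e he
            have heP : e ∈ e₀ :: P₁ := by
              rcases List.mem_cons.mp he with rfl | h
              · exact List.mem_cons_self
              · exact List.mem_cons_of_mem _ (hQsub _ h)
            have hg := hgood e heP
            have hei : e.1.2 / L = j₀ := by
              rcases List.mem_cons.mp he with rfl | h
              · rfl
              · exact hcase e h
            have h1 := div_block hL0 hei
            have h2 := div_block hL0 (hg.2.2.2.1.trans hei)
            exact ⟨hg.2.1, hg.2.2.2.2.2.1, h1.1, h2.2⟩
          have := tele (fun e => e.1.2) (fun e => e.2.1.2) (fun e => e.2.2) (e₀ :: Q)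
            (L * j₀) (L * j₀ + L) (hQpw'.imp (fun h => h.2)) hb
          omega
      -- recurse on P'
      have hP'len : P'.length ≤ N := by
        have h1 : Q.length + P'.length = P₁.length := by
          rw [hsplit, List.length_append]
        have h2 : P₁.length + 1 ≤ N + 1 := by simpa using hlen
        omega
      obtain ⟨W', hW'match, hW'src, hW'sum⟩ := ih P' hP'len
        (hpw₁.sublist (List.dropWhile_sublist pred))
        (fun e he => hgood e (List.mem_cons_of_mem _ (hP'sub _ he)))
      -- every entry of P' lies strictly above (i₀, j₀) in blocks
      have hP'strict : ∀ e ∈ P', i₀ < e.1.1 / L ∧ j₀ < e.1.2 / L := by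
        intro e he
        rcases heq : P' with _ | ⟨e₁, P''⟩
        · rw [heq] at he; simp at he
        · have hne : P₁.dropWhile pred ≠ [] := by rw [← hP'def, heq]; simp
          have hfail := List.head_dropWhile_not pred hne
          have hh1 : (P₁.dropWhile pred).head? = some ((P₁.dropWhile pred).head hne) :=
            List.head?_eq_head hne
          have hh2 : (P₁.dropWhile pred).head? = some e₁ := by rw [← hP'def, heq]; rfl
          have hhead : (P₁.dropWhile pred).head hne = e₁ := by
            rw [hh1] at hh2; exact Option.some_injective _ hh2
          rw [hhead] at hfail
          have hne₁ : e₁.1.1 / L ≠ i₀ ∧ e₁.1.2 / L ≠ j₀ := by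
            have := of_decide_eq_false hfail
            push_neg at this
            exact this
          have he₁P₁ : e₁ ∈ P₁ := hP'sub e₁ (by rw [heq]; exact List.mem_cons_self)
          have hstrict₁ : i₀ < e₁.1.1 / L ∧ j₀ < e₁.1.2 / L :=
            ⟨lt_of_le_of_ne (hblocks _ he₁P₁).1 (Ne.symm hne₁.1),
             lt_of_le_of_ne (hblocks _ he₁P₁).2 (Ne.symm hne₁.2)⟩
          rw [heq] at he
          rcases List.mem_cons.mp he with rfl | he''
          · exact hstrict₁
          · have hP'pw : P'.Pairwise EnR := hpw₁.sublist (List.dropWhile_sublist pred)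
            rw [heq] at hP'pw
            have h12 : EnR e₁ e := (List.pairwise_cons.mp hP'pw).1 e he''
            have hg₁ := hgood e₁ (List.mem_cons_of_mem _ he₁P₁)
            constructor
            · calc i₀ < e₁.1.1 / L := hstrict₁.1
                _ = e₁.2.1.1 / L := hg₁.2.2.1.symm
                _ ≤ e.1.1 / L := Nat.div_le_div_right h12.1.le
            · calc j₀ < e₁.1.2 / L := hstrict₁.2
                _ = e₁.2.1.2 / L := hg₁.2.2.2.1.symm
                _ ≤ e.1.2 / L := Nat.div_le_div_right h12.2.le
      refine ⟨(i₀, j₀) :: W', ⟨?_, ?_⟩, ?_, ?_⟩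
      · show List.IsChain _ _
        rw [List.isChain_cons]
        refine ⟨?_, hW'match.1⟩
        intro y hy
        have hyW : y ∈ W' := List.mem_of_mem_head? hy
        obtain ⟨e, heP', rfl⟩ := hW'src y hyW
        exact ⟨(hP'strict e heP').1, (hP'strict e heP').2⟩
      · intro p hp
        rcases List.mem_cons.mp hp with rfl | hp'
        · exact ⟨hgood₀.2.2.2.2.2.2.1, hgood₀.2.2.2.2.2.2.2.1, hgood₀.2.2.2.2.2.2.2.2⟩
        · exact hW'match.2 p hp'
      · intro q hq
        rcases List.mem_cons.mp hq with rfl | hq'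
        · exact ⟨e₀, List.mem_cons_self, rfl⟩
        · obtain ⟨e, heP', rfl⟩ := hW'src q hq'
          exact ⟨e, List.mem_cons_of_mem _ (hP'sub _ heP'), rfl⟩
      · have hPsplit : e₀ :: P₁ = (e₀ :: Q) ++ P' := by
          rw [List.cons_append, hsplit]
        rw [hPsplit, List.map_append, List.sum_append]
        have hWlen : ((i₀, j₀) :: W').length = W'.length + 1 := by simp
        rw [hWlen, Nat.mul_add, Nat.mul_one]
        omega


set_option maxHeartbeats 2000000 in
lemma master {Γ₀ Γ : Type*} (L : ℕ) (A : Γ₀ → List Γ) (hL : ∀ σ, (A σ).length = L) (hL0 : 0 < L)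
    (α R : ℝ) (hα0 : 0 < α) (hα2 : α < 1/2) (hR0 : 0 < R)
    (hsep : ∀ σ σ' : Γ₀, σ ≠ σ' → ∀ C D : List Γ, C <:+: A σ → D <:+: A σ' →
      (L : ℝ) / R ≤ C.length → (L : ℝ) / R ≤ D.length → α ≤ fbar C D)
    (a b : List Γ₀) :
    ∀ (N : ℕ) (M : List (ℕ × ℕ)) (u v : ℕ), M.length ≤ N →
      IsMatch (a.flatMap A) (b.flatMap A) M →
      (∀ p ∈ M, u ≤ p.1 ∧ v ≤ p.2) → u ≤ L * a.length → v ≤ L * b.length →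
      ∃ (P : List E) (s : ℕ),
        P.Pairwise EnR ∧ (∀ e ∈ P, Good L a b e) ∧ (∀ e ∈ P, e.1 ∈ M ∧ e.2.1 ∈ M) ∧
        s + u / L + v / L ≤ a.length + b.length ∧
        (M.length : ℝ) ≤ (1 - α) / 2 * (((L:ℝ) * a.length - u) + ((L:ℝ) * b.length - v))
          + α * (((P.map (fun e => e.2.2)).sum : ℕ) : ℝ) + α * ((L:ℝ) / R) * s := by
  have hdivle : ∀ {u' : ℕ} {c : List Γ₀}, u' ≤ L * c.length → u' / L ≤ c.length := by
    intro u' c hu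
    have := Nat.div_le_div_right (c := L) hu
    rwa [Nat.mul_div_cancel_left _ hL0] at this
  have hnilcase : ∀ (u v : ℕ), u ≤ L * a.length → v ≤ L * b.length →
      ∃ (P : List E) (s : ℕ),
        P.Pairwise EnR ∧ (∀ e ∈ P, Good L a b e) ∧
        (∀ e ∈ P, e.1 ∈ ([] : List (ℕ × ℕ)) ∧ e.2.1 ∈ ([] : List (ℕ × ℕ))) ∧
        s + u / L + v / L ≤ a.length + b.length ∧
        ((([] : List (ℕ × ℕ)).length : ℝ) ≤
          (1 - α) / 2 * (((L:ℝ) * a.length - u) + ((L:ℝ) * b.length - v))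
          + α * (((P.map (fun e => e.2.2)).sum : ℕ) : ℝ) + α * ((L:ℝ) / R) * s) := by
    intro u v hu hv
    refine ⟨[], 0, List.Pairwise.nil, by simp, by simp, ?_, ?_⟩
    · have h1 := hdivle hu; have h2 := hdivle hv; omega
    · have hu' : (u:ℝ) ≤ (L:ℝ) * a.length := by exact_mod_cast hu
      have hv' : (v:ℝ) ≤ (L:ℝ) * b.length := by exact_mod_cast hv
      simp only [List.length_nil, List.map_nil, List.sum_nil, Nat.cast_zero]
      nlinarith
  intro N
  induction N with
  | zero =>
    intro M u v hlen hM hmem hu hv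
    have hMnil : M = [] := List.length_eq_zero_iff.mp (Nat.le_zero.mp hlen)
    subst hMnil
    exact hnilcase u v hu hv
  | succ N ih =>
    intro M u v hlen hM hmem hu hv
    rcases M with _ | ⟨p₀, M₁⟩
    · exact hnilcase u v hu hv
    · have hXlen : (a.flatMap A).length = L * a.length := length_flatMap_const hL a
      have hYlen : (b.flatMap A).length = L * b.length := length_flatMap_const hL b
      have hpwM : (p₀ :: M₁).Pairwise Rlt := isMatch_pairwise hM
      set i₀ := p₀.1 / L with hi₀def
      set j₀ := p₀.2 / L with hj₀def
      set pred : ℕ × ℕ → Bool := fun q => decide (q.1 / L = i₀ ∧ q.2 / L = j₀) with hpreddef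
      set r₁ := M₁.takeWhile pred with hr₁def
      set rest := M₁.dropWhile pred with hrestdef
      set run := p₀ :: r₁ with hrundef
      have hM₁ : M₁ = r₁ ++ rest := (List.takeWhile_append_dropWhile (p := pred) (l := M₁)).symm
      have hMrun : p₀ :: M₁ = run ++ rest := by rw [hrundef, List.cons_append, ← hM₁]
      have hrun_sub : ∀ p ∈ run, p ∈ p₀ :: M₁ := by
        intro p hp; rw [hMrun]; exact List.mem_append_left _ hp
      have hrest_sub : ∀ p ∈ rest, p ∈ p₀ :: M₁ := by
        intro p hp; rw [hMrun]; exact List.mem_append_right _ hp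
      have hpwsplit : (run ++ rest).Pairwise Rlt := by rw [← hMrun]; exact hpwM
      have hrun_pw : run.Pairwise Rlt := (List.pairwise_append.mp hpwsplit).1
      have hrest_pw : rest.Pairwise Rlt := (List.pairwise_append.mp hpwsplit).2.1
      have hcross : ∀ p ∈ run, ∀ q ∈ rest, Rlt p q := (List.pairwise_append.mp hpwsplit).2.2
      have hrun_block : ∀ p ∈ run, p.1 / L = i₀ ∧ p.2 / L = j₀ := by
        intro p hp
        rcases List.mem_cons.mp hp with rfl | hp'
        · exact ⟨rfl, rfl⟩
        · have := List.mem_takeWhile_imp hp'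
          simpa [hpreddef] using this
      have hrun_ne : run ≠ [] := List.cons_ne_nil _ _
      set l := run.getLast hrun_ne with hldef
      have hl_mem : l ∈ run := by rw [hldef]; exact List.getLast_mem hrun_ne
      have hl_block := hrun_block l hl_mem
      have hub : ∀ p ∈ run, p.1 ≤ l.1 ∧ p.2 ≤ l.2 := by
        intro p hp
        rcases mem_rel_getLast run hrun_ne hrun_pw hp with heq | hrel
        · rw [← hldef] at heq
          exact ⟨heq ▸ le_refl _, heq ▸ le_refl _⟩
        · rw [← hldef] at hrel
          exact ⟨hrel.1.le, hrel.2.le⟩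
      have hlb : ∀ p ∈ run, p₀.1 ≤ p.1 ∧ p₀.2 ≤ p.2 := by
        intro p hp
        rcases List.mem_cons.mp hp with rfl | hp'
        · exact ⟨le_refl _, le_refl _⟩
        · have := (List.pairwise_cons.mp hrun_pw).1 p hp'
          exact ⟨this.1.le, this.2.le⟩
      have hbound : ∀ p ∈ p₀ :: M₁, p.1 < L * a.length ∧ p.2 < L * b.length := by
        intro p hp
        have h := hM.2 p hp
        exact ⟨hXlen ▸ h.1, hYlen ▸ h.2.1⟩
      have hp₀b := hbound p₀ (List.mem_cons_self)
      have hi₀n : i₀ < a.length := by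
        rw [hi₀def, Nat.div_lt_iff_lt_mul hL0, mul_comm]
        exact hp₀b.1
      have hj₀m : j₀ < b.length := by
        rw [hj₀def, Nat.div_lt_iff_lt_mul hL0, mul_comm]
        exact hp₀b.2
      set c := l.1 - p₀.1 + 1 with hcdef
      set d := l.2 - p₀.2 + 1 with hddef
      have hl_lb := hlb l hl_mem
      have hrunc : run.length ≤ c := by
        have := length_le_of_mono Prod.fst (hrun_pw.imp (fun h => h.1)) (lo := p₀.1) (hi := l.1 + 1)
          (fun p hp => ⟨(hlb p hp).1, Nat.lt_succ_of_le (hub p hp).1⟩)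
        omega
      have hrund : run.length ≤ d := by
        have := length_le_of_mono Prod.snd (hrun_pw.imp (fun h => h.2)) (lo := p₀.2) (hi := l.2 + 1)
          (fun p hp => ⟨(hlb p hp).2, Nat.lt_succ_of_le (hub p hp).2⟩)
        omega
      have hc1 : 1 ≤ c := by omega
      have hdivi₀ := div_block hL0 hi₀def.symm
      have hdivj₀ := div_block hL0 hj₀def.symm
      have hdivl1 := div_block hL0 hl_block.1
      have hdivl2 := div_block hL0 hl_block.2
      have hpack : ∃ (u'' v'' : ℕ) (P' : List E) (s' : ℕ),
          l.1 < u'' ∧ l.2 < v'' ∧ u'' ≤ L * a.length ∧ v'' ≤ L * b.length ∧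
          P'.Pairwise EnR ∧ (∀ e ∈ P', Good L a b e) ∧ (∀ e ∈ P', e.1 ∈ rest ∧ e.2.1 ∈ rest) ∧
          s' + i₀ + j₀ + 1 ≤ a.length + b.length ∧
          (rest.length : ℝ) ≤ (1 - α) / 2 * (((L:ℝ) * a.length - u'') + ((L:ℝ) * b.length - v''))
            + α * (((P'.map (fun e => e.2.2)).sum : ℕ) : ℝ) + α * ((L:ℝ) / R) * s' := by
        rcases hr : rest with _ | ⟨f', rest'⟩
        · refine ⟨L * a.length, L * b.length, [], 0, ?_, ?_, le_refl _, le_refl _,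
            List.Pairwise.nil, by simp, by simp, by omega, ?_⟩
          · exact (hbound l (hrun_sub l hl_mem)).1
          · exact (hbound l (hrun_sub l hl_mem)).2
          · simp only [List.length_nil, List.map_nil, List.sum_nil, Nat.cast_zero]
            push_cast
            nlinarith [hα2]
        · rw [← hr]
          have hf'rest : f' ∈ rest := by rw [hr]; exact List.mem_cons_self
          have hf'M : f' ∈ p₀ :: M₁ := hrest_sub f' hf'rest
          have hf'b := hbound f' hf'M
          have hlf' : Rlt l f' := hcross l hl_mem f' hf'rest
          have hrestlen : rest.length ≤ N := by
            have h1 : rest.Sublist M₁ := by rw [hrestdef]; exact List.dropWhile_sublist pred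
            have h2 := h1.length_le
            have h3 : M₁.length + 1 ≤ N + 1 := by simpa using hlen
            omega
          have hrest_match : IsMatch (a.flatMap A) (b.flatMap A) rest :=
            ⟨List.isChain_iff_pairwise.mpr hrest_pw, fun p hp => hM.2 p (hrest_sub p hp)⟩
          have hrest_mem : ∀ p ∈ rest, f'.1 ≤ p.1 ∧ f'.2 ≤ p.2 := by
            intro p hp
            rw [hr] at hp
            rcases List.mem_cons.mp hp with rfl | hp'
            · exact ⟨le_refl _, le_refl _⟩
            · have hpw' := hrest_pw
              rw [hr] at hpw'
              have := (List.pairwise_cons.mp hpw').1 p hp'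
              exact ⟨this.1.le, this.2.le⟩
          obtain ⟨P', s', hP'pw, hP'good, hP'mem, hP's, hP'bound⟩ :=
            ih rest f'.1 f'.2 hrestlen hrest_match hrest_mem hf'b.1.le hf'b.2.le
          have hge_i : i₀ ≤ f'.1 / L := by
            calc i₀ = l.1 / L := hl_block.1.symm
              _ ≤ f'.1 / L := Nat.div_le_div_right hlf'.1.le
          have hge_j : j₀ ≤ f'.2 / L := by
            calc j₀ = l.2 / L := hl_block.2.symm
              _ ≤ f'.2 / L := Nat.div_le_div_right hlf'.2.le
          have hne : ¬ (f'.1 / L = i₀ ∧ f'.2 / L = j₀) := by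
            have hne' : M₁.dropWhile pred ≠ [] := by rw [← hrestdef, hr]; simp
            have hfail := List.head_dropWhile_not pred hne'
            have hh1 : (M₁.dropWhile pred).head? = some ((M₁.dropWhile pred).head hne') :=
              List.head?_eq_head hne'
            have hh2 : (M₁.dropWhile pred).head? = some f' := by rw [← hrestdef, hr]; rfl
            rw [hh1] at hh2
            have hhead := Option.some_injective _ hh2
            rw [hhead] at hfail
            simpa [hpreddef] using of_decide_eq_false hfail
          have hP'mem' : ∀ e ∈ P', e.1 ∈ rest ∧ e.2.1 ∈ rest := by
            intro e he
            exact hP'mem e he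
          exact ⟨f'.1, f'.2, P', s', hlf'.1, hlf'.2, hf'b.1.le, hf'b.2.le, hP'pw, hP'good,
            hP'mem', by omega, hP'bound⟩
      obtain ⟨u'', v'', P', s', hlu, hlv, hun, hvm, hP'pw, hP'good, hP'mem, hs'', hbound'⟩ := hpack
      have hup₀ : u ≤ p₀.1 := (hmem p₀ (List.mem_cons_self)).1
      have hvp₀ : v ≤ p₀.2 := (hmem p₀ (List.mem_cons_self)).2
      have hcu : (c : ℝ) ≤ (u'' : ℝ) - u := by
        have h1 : c + u ≤ u'' := by omega
        have h2 : (c : ℝ) + (u : ℝ) ≤ (u'' : ℝ) := by exact_mod_cast h1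
        linarith
      have hdv : (d : ℝ) ≤ (v'' : ℝ) - v := by
        have h1 : d + v ≤ v'' := by omega
        have h2 : (d : ℝ) + (v : ℝ) ≤ (v'' : ℝ) := by exact_mod_cast h1
        linarith
      have hrunc' : (run.length : ℝ) ≤ (c : ℝ) := by exact_mod_cast hrunc
      have hrund' : (run.length : ℝ) ≤ (d : ℝ) := by exact_mod_cast hrund
      have hα1 : (0:ℝ) < 1 - α := by linarith
      have hMlen : (((p₀ :: M₁) : List (ℕ × ℕ)).length : ℝ) = (run.length : ℝ) + (rest.length : ℝ) := by
        rw [hMrun, List.length_append]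
        exact_mod_cast rfl
      have hudiv : u / L ≤ i₀ := by rw [hi₀def]; exact Nat.div_le_div_right hup₀
      have hvdiv : v / L ≤ j₀ := by rw [hj₀def]; exact Nat.div_le_div_right hvp₀
      have hsplitid : (1 - α) / 2 * (((L:ℝ) * a.length - u) + ((L:ℝ) * b.length - v)) =
          (1 - α) / 2 * (((L:ℝ) * a.length - u'') + ((L:ℝ) * b.length - v''))
          + (1 - α) / 2 * (((u'':ℝ) - u) + ((v'':ℝ) - v)) := by ring
      by_cases hcaseA : a[i₀]? = b[j₀]?
      · -- case a : equal symbols, produce an entry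
        have hgoode₀ : Good L a b ((p₀, l, run.length) : E) := by
          unfold Good
          dsimp only
          refine ⟨hl_lb.1, hl_lb.2, hl_block.1.trans hi₀def, hl_block.2.trans hj₀def,
            by omega, by omega, hi₀def ▸ hi₀n, hj₀def ▸ hj₀m, ?_⟩
          rw [← hi₀def, ← hj₀def]
          exact hcaseA
        refine ⟨(p₀, l, run.length) :: P', s', ?_, ?_, ?_, by omega, ?_⟩
        · rw [List.pairwise_cons]
          refine ⟨?_, hP'pw⟩
          intro e' he'
          have hm' := hP'mem e' he'
          exact hcross l hl_mem e'.1 hm'.1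
        · intro e he
          rcases List.mem_cons.mp he with rfl | he'
          · exact hgoode₀
          · exact hP'good e he'
        · intro e he
          rcases List.mem_cons.mp he with rfl | he'
          · exact ⟨List.mem_cons_self, hrun_sub l hl_mem⟩
          · exact ⟨hrest_sub _ (hP'mem e he').1, hrest_sub _ (hP'mem e he').2⟩
        · have h2d : 2 * (run.length : ℝ) ≤ ((u'':ℝ) - u) + ((v'':ℝ) - v) := by linarith
          have hmul := mul_le_mul_of_nonneg_left h2d (by linarith : (0:ℝ) ≤ (1 - α) / 2)
          have hper : (run.length : ℝ) ≤ (1 - α) / 2 * (((u'':ℝ) - u) + ((v'':ℝ) - v))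
              + α * (run.length : ℝ) := by nlinarith [hmul]
          have hsum : (((((p₀, l, run.length) :: P').map (fun e => e.2.2)).sum : ℕ) : ℝ)
              = (run.length : ℝ) + (((P'.map (fun e => e.2.2)).sum : ℕ) : ℝ) := by
            simp
          have hdistrib : α * ((run.length : ℝ) + (((P'.map (fun e => e.2.2)).sum : ℕ) : ℝ))
              = α * (run.length : ℝ) + α * (((P'.map (fun e => e.2.2)).sum : ℕ) : ℝ) := by ring
          rw [hMlen, hsum]
          linarith [hbound', hper, hsplitid, hdistrib]
      · by_cases hbig : ((L:ℝ)/R ≤ (c:ℝ) ∧ (L:ℝ)/R ≤ (d:ℝ))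
        · -- big blocks with distinct symbols: use hsep
          have hσmem : a[i₀]? = some (a[i₀]'hi₀n) := List.getElem?_eq_getElem hi₀n
          have hσ'mem : b[j₀]? = some (b[j₀]'hj₀m) := List.getElem?_eq_getElem hj₀m
          set σ := a[i₀]'hi₀n with hσdef
          set σ' := b[j₀]'hj₀m with hσ'def
          have hneσ : σ ≠ σ' := by
            intro h
            apply hcaseA
            rw [hσmem, hσ'mem, h]
          set C := ((A σ).drop (p₀.1 - L * i₀)).take c with hCdef
          set D := ((A σ').drop (p₀.2 - L * j₀)).take d with hDdef
          have hCinfix : C <:+: A σ := by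
            rw [hCdef]
            exact (List.take_prefix _ _).isInfix.trans (List.drop_suffix _ _).isInfix
          have hDinfix : D <:+: A σ' := by
            rw [hDdef]
            exact (List.take_prefix _ _).isInfix.trans (List.drop_suffix _ _).isInfix
          have hClen : C.length = c := by
            rw [hCdef, List.length_take, List.length_drop, hL σ]
            omega
          have hDlen : D.length = d := by
            rw [hDdef, List.length_take, List.length_drop, hL σ']
            omega
          set Mr := run.map (fun p => (p.1 - p₀.1, p.2 - p₀.2)) with hMrdef
          have hMrmatch : IsMatch C D Mr := by
            constructor
            · apply List.isChain_iff_pairwise.mpr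
              rw [hMrdef, List.pairwise_map]
              apply hrun_pw.imp_of_mem
              intro p q hp hq hpq
              have h1 := hlb p hp
              exact ⟨by omega, by omega⟩
            · intro pq hpq
              rw [hMrdef, List.mem_map] at hpq
              obtain ⟨p, hp, rfl⟩ := hpq
              have hpb := hub p hp
              have hpl := hlb p hp
              have hpblock := hrun_block p hp
              have hXp : (a.flatMap A)[p.1]? = (A σ)[p.1 % L]? := by
                apply getElem?_flatMap_const hL hL0
                rw [hpblock.1]
                exact hσmem
              have hYp : (b.flatMap A)[p.2]? = (A σ')[p.2 % L]? := by
                apply getElem?_flatMap_const hL hL0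
                rw [hpblock.2]
                exact hσ'mem
              have hmod1 : p.1 % L = p.1 - L * i₀ := by
                have h1 := Nat.div_add_mod p.1 L
                rw [hpblock.1] at h1
                have := div_block hL0 hpblock.1
                omega
              have hmod2 : p.2 % L = p.2 - L * j₀ := by
                have h1 := Nat.div_add_mod p.2 L
                rw [hpblock.2] at h1
                have := div_block hL0 hpblock.2
                omega
              have hCg : C[p.1 - p₀.1]? = (A σ)[p.1 - L * i₀]? := by
                rw [hCdef, List.getElem?_take, if_pos (by omega), List.getElem?_drop]
                congr 1
                have := div_block hL0 hpblock.1
                omega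
              have hDg : D[p.2 - p₀.2]? = (A σ')[p.2 - L * j₀]? := by
                rw [hDdef, List.getElem?_take, if_pos (by omega), List.getElem?_drop]
                congr 1
                have := div_block hL0 hpblock.2
                omega
              refine ⟨by rw [hClen]; omega, by rw [hDlen]; omega, ?_⟩
              rw [hCg, hDg, ← hmod1, ← hmod2, ← hXp, ← hYp]
              exact (hM.2 p (hrun_sub p hp)).2.2
          have hfb := hsep σ σ' hneσ C D hCinfix hDinfix
            (by rw [hClen]; exact hbig.1) (by rw [hDlen]; exact hbig.2)
          simp only [fbar] at hfb
          rw [hClen, hDlen] at hfb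
          set S : ℕ := sSup {r : ℕ | ∃ M' : List (ℕ × ℕ), IsMatch C D M' ∧ M'.length = r} with hSdef
          have hS : run.length ≤ S := by
            rw [hSdef]
            have := le_matchSup hMrmatch
            rwa [hMrdef, List.length_map] at this
          have hS' : (run.length : ℝ) ≤ (S : ℝ) := by exact_mod_cast hS
          have hcd0 : (0:ℝ) < (c:ℝ) + (d:ℝ) := by
            have h1 : (1:ℝ) ≤ (c:ℝ) := by exact_mod_cast hc1
            have h2 : (0:ℝ) ≤ (d:ℝ) := Nat.cast_nonneg d
            linarith
          have h3 : 2 * (S:ℝ) / ((c:ℝ) + (d:ℝ)) ≤ 1 - α := by linarith [hfb]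
          rw [div_le_iff₀ hcd0] at h3
          have hper : (run.length : ℝ) ≤ (1 - α) / 2 * ((c:ℝ) + (d:ℝ)) := by linarith
          have hcdle : (c:ℝ) + (d:ℝ) ≤ ((u'':ℝ) - u) + ((v'':ℝ) - v) := by linarith
          have hmul := mul_le_mul_of_nonneg_left hcdle (by linarith : (0:ℝ) ≤ (1 - α) / 2)
          have hper2 : (run.length : ℝ) ≤ (1 - α) / 2 * (((u'':ℝ) - u) + ((v'':ℝ) - v)) := by
            linarith
          refine ⟨P', s', hP'pw, hP'good, ?_, by omega, ?_⟩
          · intro e he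
            exact ⟨hrest_sub _ (hP'mem e he).1, hrest_sub _ (hP'mem e he).2⟩
          · rw [hMlen]
            linarith [hbound', hper2, hsplitid]
        · -- small block: pay α·L/R
          rw [not_and_or] at hbig
          have hLR0 : (0:ℝ) ≤ α * ((L:ℝ)/R) := by positivity
          have hsmall : α * (run.length : ℝ) ≤ α * ((L:ℝ)/R) := by
            rcases hbig with h | h
            · push_neg at h
              have : (run.length : ℝ) ≤ (L:ℝ)/R := by linarith
              exact mul_le_mul_of_nonneg_left this hα0.le
            · push_neg at h
              have : (run.length : ℝ) ≤ (L:ℝ)/R := by linarith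
              exact mul_le_mul_of_nonneg_left this hα0.le
          have h2d : 2 * (run.length : ℝ) ≤ ((u'':ℝ) - u) + ((v'':ℝ) - v) := by linarith
          have hmul := mul_le_mul_of_nonneg_left h2d (by linarith : (0:ℝ) ≤ (1 - α) / 2)
          have hper2 : (run.length : ℝ) ≤ (1 - α) / 2 * (((u'':ℝ) - u) + ((v'':ℝ) - v))
              + α * ((L:ℝ)/R) := by nlinarith [hmul, hsmall]
          refine ⟨P', s' + 1, hP'pw, hP'good, ?_, by omega, ?_⟩
          · intro e he
            exact ⟨hrest_sub _ (hP'mem e he).1, hrest_sub _ (hP'mem e he).2⟩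
          · have hsc : ((s' + 1 : ℕ) : ℝ) = (s' : ℝ) + 1 := by push_cast; ring
            have hexp : α * ((L:ℝ)/R) * ((s':ℝ) + 1) = α * ((L:ℝ)/R) * (s':ℝ) + α * ((L:ℝ)/R) := by
              ring
            rw [hMlen, hsc]
            linarith [hbound', hper2, hsplitid, hexp]

end Stmt7Aux

set_option maxHeartbeats 1000000 in
/-- **Symbol by block replacement.** -/
theorem stmt7 {Γ₀ Γ : Type*} (L : ℕ) (A : Γ₀ → List Γ) (hL : ∀ σ, (A σ).length = L)
    (α R : ℝ) (hα0 : 0 < α) (hα : α < 1 / 7) (hR : 2 ≤ R)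
    (hsep : ∀ σ σ' : Γ₀, σ ≠ σ' → ∀ C D : List Γ, C <:+: A σ → D <:+: A σ' →
      (L : ℝ) / R ≤ C.length → (L : ℝ) / R ≤ D.length → α ≤ fbar C D)
    (a b : List Γ₀) :
    fbar (a.flatMap A) (b.flatMap A) > α * fbar a b - 1 / R := by
  classical
  have hR0 : (0:ℝ) < R := by linarith
  have hα2 : α < 1/2 := by linarith
  by_cases htriv : (a.flatMap A) = [] ∨ (b.flatMap A) = []
  · have h1 : fbar (a.flatMap A) (b.flatMap A) = 1 := Stmt7Aux.fbar_eq_one_of_nil _ htriv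
    have h2 : fbar a b ≤ 1 := Stmt7Aux.fbar_le_one a b
    have h3 : (0:ℝ) < 1/R := by positivity
    have h4 : α * fbar a b ≤ α * 1 := mul_le_mul_of_nonneg_left h2 hα0.le
    rw [h1]
    linarith
  · push_neg at htriv
    obtain ⟨hXne, hYne⟩ := htriv
    have hXlen : (a.flatMap A).length = L * a.length := Stmt7Aux.length_flatMap_const hL a
    have hYlen : (b.flatMap A).length = L * b.length := Stmt7Aux.length_flatMap_const hL b
    have hXlen0 : 0 < (a.flatMap A).length := List.length_pos_iff.mpr hXne
    have hYlen0 : 0 < (b.flatMap A).length := List.length_pos_iff.mpr hYne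
    have hL0 : 0 < L := by
      rcases Nat.eq_zero_or_pos L with h | h
      · rw [hXlen, h] at hXlen0; simp at hXlen0
      · exact h
    have hn0 : 0 < a.length := by
      rcases Nat.eq_zero_or_pos a.length with h | h
      · rw [hXlen, h] at hXlen0; simp at hXlen0
      · exact h
    have hm0 : 0 < b.length := by
      rcases Nat.eq_zero_or_pos b.length with h | h
      · rw [hYlen, h] at hYlen0; simp at hYlen0
      · exact h
    simp only [fbar]
    rw [hXlen, hYlen]
    set K := sSup {r : ℕ | ∃ M : List (ℕ × ℕ),
      IsMatch (a.flatMap A) (b.flatMap A) M ∧ M.length = r} with hKdef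
    set k := sSup {r : ℕ | ∃ M : List (ℕ × ℕ), IsMatch a b M ∧ M.length = r} with hkdef
    have hKmem : K ∈ {r : ℕ | ∃ M : List (ℕ × ℕ),
        IsMatch (a.flatMap A) (b.flatMap A) M ∧ M.length = r} := by
      rw [hKdef]
      exact Nat.sSup_mem ⟨0, Stmt7Aux.matchSet_zero_mem _ _⟩ (Stmt7Aux.matchSet_bdd _ _)
    obtain ⟨M, hM, hMK⟩ := hKmem
    obtain ⟨P, s, hPpw, hPgood, hPmem, hs, hbound⟩ :=
      Stmt7Aux.master L A hL hL0 α R hα0 hα2 hR0 hsep a b M.length M 0 0 le_rfl hM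
        (by intro p hp; exact ⟨Nat.zero_le _, Nat.zero_le _⟩) (Nat.zero_le _) (Nat.zero_le _)
    obtain ⟨W, hWmatch, hWsrc, hWsum⟩ := Stmt7Aux.lemB L hL0 a b P.length P le_rfl hPpw hPgood
    have hWk : W.length ≤ k := by rw [hkdef]; exact Stmt7Aux.le_matchSup hWmatch
    have hs' : s ≤ a.length + b.length := by
      have := hs; simp only [Nat.zero_div, Nat.add_zero] at this; omega
    have hT0 : (0:ℝ) < (a.length:ℝ) + (b.length:ℝ) := by
      have h1 : (1:ℝ) ≤ (a.length:ℝ) := by exact_mod_cast hn0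
      have h2 : (0:ℝ) ≤ (b.length:ℝ) := Nat.cast_nonneg _
      linarith
    have hL0' : (0:ℝ) < (L:ℝ) := by exact_mod_cast hL0
    have hden : (0:ℝ) < (L:ℝ) * (a.length:ℝ) + (L:ℝ) * (b.length:ℝ) := by nlinarith
    have hcastLn : ((L * a.length : ℕ):ℝ) = (L:ℝ) * (a.length:ℝ) := by push_cast; ring
    have hcastLm : ((L * b.length : ℕ):ℝ) = (L:ℝ) * (b.length:ℝ) := by push_cast; ring
    rw [hcastLn, hcastLm]
    have hb2 : (K:ℝ) ≤ (1 - α) / 2 * ((L:ℝ) * (a.length:ℝ) + (L:ℝ) * (b.length:ℝ))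
        + α * (((P.map (fun e => e.2.2)).sum : ℕ) : ℝ)
        + α * ((L:ℝ)/R) * (s:ℝ) := by
      have := hbound
      rw [hMK] at this
      simp only [Nat.cast_zero, sub_zero] at this
      linarith
    have hSig : (((P.map (fun e => e.2.2)).sum : ℕ) : ℝ) ≤ (L:ℝ) * (k:ℝ) := by
      have h1 : ((P.map (fun e => e.2.2)).sum : ℕ) ≤ L * k :=
        le_trans hWsum (Nat.mul_le_mul_left L hWk)
      exact_mod_cast h1
    have hsr : (s:ℝ) ≤ (a.length:ℝ) + (b.length:ℝ) := by exact_mod_cast hs'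
    have hkey : (K:ℝ) ≤ (1 - α) / 2 * ((L:ℝ) * (a.length:ℝ) + (L:ℝ) * (b.length:ℝ))
        + α * ((L:ℝ) * (k:ℝ)) + α * ((L:ℝ)/R) * ((a.length:ℝ) + (b.length:ℝ)) := by
      have t1 : α * (((P.map (fun e => e.2.2)).sum : ℕ) : ℝ) ≤ α * ((L:ℝ) * (k:ℝ)) :=
        mul_le_mul_of_nonneg_left hSig hα0.le
      have t2 : α * ((L:ℝ)/R) * (s:ℝ) ≤ α * ((L:ℝ)/R) * ((a.length:ℝ) + (b.length:ℝ)) :=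
        mul_le_mul_of_nonneg_left hsr (by positivity)
      linarith
    have hmain : 2 * (K:ℝ) / ((L:ℝ) * (a.length:ℝ) + (L:ℝ) * (b.length:ℝ))
        ≤ (1 - α) + 2 * α * (k:ℝ) / ((a.length:ℝ) + (b.length:ℝ)) + 2 * α / R := by
      rw [div_le_iff₀ hden]
      have hexpand : ((1 - α) + 2 * α * (k:ℝ) / ((a.length:ℝ) + (b.length:ℝ)) + 2 * α / R)
          * ((L:ℝ) * (a.length:ℝ) + (L:ℝ) * (b.length:ℝ))
          = (1 - α) * ((L:ℝ) * (a.length:ℝ) + (L:ℝ) * (b.length:ℝ))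
            + 2 * α * (L:ℝ) * (k:ℝ)
            + 2 * α * ((L:ℝ)/R) * ((a.length:ℝ) + (b.length:ℝ)) := by
        field_simp
      rw [hexpand]
      linarith
    have hlast : 2 * α / R < 1 / R := by
      rw [div_lt_div_iff_of_pos_right hR0]
      linarith
    have hrhs : α * (1 - 2 * (k:ℝ) / ((a.length:ℝ) + (b.length:ℝ)))
        = α - α * (2 * (k:ℝ) / ((a.length:ℝ) + (b.length:ℝ)))  := by ring
    have hak : 2 * α * (k:ℝ) / ((a.length:ℝ) + (b.length:ℝ))
        = α * (2 * (k:ℝ) / ((a.length:ℝ) + (b.length:ℝ))) := by ring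
    rw [gt_iff_lt]
    linarith [hmain, hlast, hrhs, hak]
end

section
/- Suppose a₁, a₂, …, a_N are distinct symbols in an alphabet Σ. Let M, S, T, j, k be positive integers with S ≥ T and M ≥ j > k, and set B_k = (a₁^{T·N^{2k}} a₂^{T·N^{2k}} ⋯ a_N^{T·N^{2k}})^{N^{2(M+1−k)}} and B_j = (a₁^{S·N^{2j}} a₂^{S·N^{2j}} ⋯ a_N^{S·N^{2j}})^{N^{2(M+1−j)}}. Suppose B and B̄ are strings of consecutive symbols in B_j and B_k, respectively, where |B| ≥ S·N^{2M+2}, and assume N ≥ 20. Then f̄(B, B̄) > 1 − 4/√N. -/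
/-- The basic block `(a₁^r a₂^r ⋯ a_N^r)^reps` of repetitions of distinct symbols. -/
def cycleBlock {Γ : Type*} (N : ℕ) (a : Fin N → Γ) (r reps : ℕ) : List Γ :=
  (List.replicate reps ((List.ofFn fun i : Fin N => List.replicate r (a i)).flatten)).flatten

lemma nat_div_add_le (A d R : ℕ) (hR : 0 < R) : (A + d) / R ≤ A / R + d / R + 1 := by
  rw [Nat.add_div hR]
  split <;> omega

lemma flatMap_replicate_getElem? {Γ : Type*} (r : ℕ) (hr : 0 < r) :
    ∀ (l : List Γ) (q : ℕ), q < l.length * r →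
      (l.flatMap fun x => List.replicate r x)[q]? = l[q / r]? := by
  intro l
  induction l with
  | nil => intro q hq; simp at hq
  | cons x l ih =>
    intro q hq
    rw [List.flatMap_cons]
    by_cases h : q < r
    · rw [List.getElem?_append_left (by simpa using h), Nat.div_eq_of_lt h]
      simp [List.getElem?_replicate, h]
    · push_neg at h
      obtain ⟨q', rfl⟩ : ∃ q', q = q' + r := ⟨q - r, by omega⟩
      rw [List.getElem?_append_right (by simpa using h)]
      simp only [List.length_replicate, Nat.add_sub_cancel]
      have hlr : (x :: l).length * r = l.length * r + r := by
        rw [List.length_cons, Nat.add_mul, Nat.one_mul]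
      rw [hlr] at hq
      have hq2 : q' < l.length * r := Nat.lt_of_add_lt_add_right hq
      rw [ih q' hq2, Nat.add_div_right _ (by omega)]
      simp


lemma replicate_flatten_getElem? {Γ : Type*} (l : List Γ) :
    ∀ (reps p : ℕ), p < reps * l.length →
      ((List.replicate reps l).flatten)[p]? = l[p % l.length]? := by
  intro reps
  induction reps with
  | zero => intro p hp; simp at hp
  | succ n ih =>
    intro p hp
    have hL : 0 < l.length := by
      rcases Nat.eq_zero_or_pos l.length with h | h
      · rw [h, Nat.mul_zero] at hp; omega
      · exact h
    rw [List.replicate_succ, List.flatten_cons]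
    by_cases h : p < l.length
    · rw [List.getElem?_append_left h, Nat.mod_eq_of_lt h]
    · push_neg at h
      obtain ⟨p', rfl⟩ : ∃ p', p = p' + l.length := ⟨p - l.length, by omega⟩
      rw [List.getElem?_append_right h, Nat.add_sub_cancel, Nat.add_mod_right]
      exact ih p' (by rw [Nat.succ_mul] at hp; omega)

lemma cycleBlock_length {Γ : Type*} (N : ℕ) (a : Fin N → Γ) (r reps : ℕ) :
    (cycleBlock N a r reps).length = reps * (N * r) := by
  have hinner : ((List.ofFn fun i : Fin N => List.replicate r (a i)).flatten).length = N * r := by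
    rw [List.length_flatten, List.map_ofFn]
    simp [Function.comp, List.sum_ofFn, Finset.sum_const, Finset.card_univ]
  rw [cycleBlock, List.length_flatten]
  simp only [List.map_replicate, hinner, List.sum_replicate, smul_eq_mul]

lemma cycleBlock_getElem? {Γ : Type*} (N : ℕ) (a : Fin N → Γ) (r reps : ℕ)
    (hN : 0 < N) (hr : 0 < r) (p : ℕ) (hp : p < reps * (N * r)) :
    (cycleBlock N a r reps)[p]? = some (a ⟨p / r % N, Nat.mod_lt _ hN⟩) := by
  have hinner : ((List.ofFn fun i : Fin N => List.replicate r (a i)).flatten).length = N * r := by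
    rw [List.length_flatten, List.map_ofFn]
    simp [Function.comp, List.sum_ofFn, Finset.sum_const, Finset.card_univ]
  have heq : (List.ofFn fun i : Fin N => List.replicate r (a i)).flatten
      = (List.ofFn a).flatMap fun x => List.replicate r x := by
    rw [List.flatMap_def, List.map_ofFn]
    rfl
  rw [cycleBlock, replicate_flatten_getElem? _ reps p (by rwa [hinner]), hinner, heq,
    flatMap_replicate_getElem? r hr (List.ofFn a) (p % (N * r))
      (by rw [List.length_ofFn]; exact Nat.mod_lt _ (by positivity))]
  have : p % (N * r) / r = p / r % N := by
    rw [Nat.mul_comm N r]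
    exact Nat.mod_mul_right_div_self p r N
  rw [this, List.getElem?_ofFn]
  simp [Nat.mod_lt _ hN]

lemma gap_lemma {m : ℕ} (f : Fin m → ℕ)
    (hf : ∀ s t : Fin m, (s : ℕ) < t → f s < f t) :
    ∀ (d : ℕ) (s t : Fin m), (t : ℕ) = s + d → f s + d ≤ f t := by
  intro d
  induction d with
  | zero => intro s t h; have : s = t := Fin.ext (by omega); rw [this]; simp
  | succ n ih =>
    intro s t h
    have hlt : (s : ℕ) + n < m := by have := t.isLt; omega
    have h1 := ih s ⟨s + n, hlt⟩ rfl
    have h2 := hf ⟨s + n, hlt⟩ t (by simp; omega)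
    omega

lemma key_count (N Rj Rk o o' lB lBbar : ℕ) (hN : 2 ≤ N) (hRk : 0 < Rk)
    (h1 : Rk * N ^ 2 ≤ Rj) (h2 : Rj * N ^ 2 ≤ lB)
    (ML : List (ℕ × ℕ))
    (hmono : ML.Pairwise fun p q => p.1 < q.1 ∧ p.2 < q.2)
    (hmem : ∀ p ∈ ML, p.1 < lB ∧ p.2 < lBbar ∧ (o + p.1) / Rj % N = (o' + p.2) / Rk % N) :
    N ^ 2 * ML.length ≤ N * (lB + lBbar) := by
  set m := ML.length with hm
  rcases Nat.eq_zero_or_pos m with hm0 | hm0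
  · rw [hm0]; simp
  -- indexed access
  have hget := List.pairwise_iff_get.mp hmono
  set P : Fin m → ℕ × ℕ := fun s => ML.get s with hP
  have hmono1 : ∀ s t : Fin m, (s : ℕ) < t → (P s).1 < (P t).1 :=
    fun s t h => (hget s t (by exact h)).1
  have hmono2 : ∀ s t : Fin m, (s : ℕ) < t → (P s).2 < (P t).2 :=
    fun s t h => (hget s t (by exact h)).2
  have hPmem : ∀ s : Fin m, P s ∈ ML := fun s => List.get_mem ML s
  set u : Fin m → ℕ := fun s => (o + (P s).1) / Rj with hu
  set v : Fin m → ℕ := fun s => (o' + (P s).2) / Rk with hv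
  have humono : ∀ s t : Fin m, (s : ℕ) ≤ t → u s ≤ u t := by
    intro s t h
    rcases eq_or_lt_of_le h with h | h
    · have : s = t := Fin.ext h; rw [this]
    · exact Nat.div_le_div_right (by have := hmono1 s t h; omega)
  have hvmono : ∀ s t : Fin m, (s : ℕ) ≤ t → v s ≤ v t := by
    intro s t h
    rcases eq_or_lt_of_le h with h | h
    · have : s = t := Fin.ext h; rw [this]
    · exact Nat.div_le_div_right (by have := hmono2 s t h; omega)
  have hres : ∀ s : Fin m, u s % N = v s % N := fun s => ((hmem _ (hPmem s)).2).2
  -- dichotomy over a block of Rk steps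
  have hdich : ∀ s t : Fin m, (t : ℕ) = s + Rk → u s + 1 ≤ u t ∨ v s + N ≤ v t := by
    intro s t ht
    have hgap : (P s).2 + Rk ≤ (P t).2 := gap_lemma (fun s => (P s).2) hmono2 Rk s t ht
    have hvlt : v s + 1 ≤ v t := by
      have : (o' + (P s).2 + Rk) / Rk ≤ (o' + (P t).2) / Rk :=
        Nat.div_le_div_right (by omega)
      rw [Nat.add_div_right _ hRk] at this
      exact this
    by_cases hcase : u s + 1 ≤ u t
    · exact Or.inl hcase
    · right
      have hueq : u t = u s := le_antisymm (by omega) (humono s t (by omega))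
      have hmod : v s % N = v t % N := by rw [← hres s, ← hres t, hueq]
      have hdvd : N ∣ v t - v s := (Nat.modEq_iff_dvd' (by omega)).mp hmod
      have := Nat.le_of_dvd (by omega) hdvd
      omega
  -- blocks
  set q : ℕ := (m - 1) / Rk with hq
  have hidx : ∀ b : ℕ, b ≤ q → b * Rk < m := by
    intro b hb
    calc b * Rk ≤ q * Rk := Nat.mul_le_mul_right _ hb
      _ ≤ m - 1 := Nat.div_mul_le_self _ _
      _ < m := by omega
  set idx : ∀ b : ℕ, b ≤ q → Fin m := fun b hb => ⟨b * Rk, hidx b hb⟩ with hidxdef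
  have hW : ∀ b : ℕ, (hb : b ≤ q) →
      N * u (idx 0 (Nat.zero_le _)) + v (idx 0 (Nat.zero_le _)) + N * b
        ≤ N * u (idx b hb) + v (idx b hb) := by
    intro b
    induction b with
    | zero => intro hb; simp
    | succ n ihn =>
      intro hb
      have hn : n ≤ q := by omega
      have hstep := hdich (idx n hn) (idx (n + 1) hb) (by simp [hidxdef, Nat.succ_mul])
      have hu' := humono (idx n hn) (idx (n + 1) hb) (by simp [hidxdef, Nat.succ_mul])
      have hv' := hvmono (idx n hn) (idx (n + 1) hb) (by simp [hidxdef, Nat.succ_mul])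
      have hih := ihn hn
      have hNn : N * (n + 1) = N * n + N := by ring
      rcases hstep with hstep | hstep
      · have hx : N * u (idx n hn) + N ≤ N * u (idx (n+1) hb) := by
          calc N * u (idx n hn) + N = N * (u (idx n hn) + 1) := by ring
            _ ≤ N * u (idx (n+1) hb) := Nat.mul_le_mul_left _ hstep
        omega
      · have hx : N * u (idx n hn) ≤ N * u (idx (n+1) hb) := Nat.mul_le_mul_left _ hu'
        omega
  -- endpoints
  set s0 : Fin m := idx 0 (Nat.zero_le _) with hs0
  set sq : Fin m := idx q le_rfl with hsq
  have hWq : N * u s0 + v s0 + N * q ≤ N * u sq + v sq := hW q le_rfl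
  -- bounds on u, v differences
  set DU : ℕ := (lB - 1) / Rj + 1 with hDU
  set DV : ℕ := (lBbar - 1) / Rk + 1 with hDV
  have hRj : 0 < Rj := lt_of_lt_of_le (by positivity) h1
  have huq : u sq ≤ u s0 + DU := by
    have h1' : (P sq).1 < lB := (hmem _ (hPmem sq)).1
    have hle : o + (P sq).1 ≤ o + (P s0).1 + (lB - 1) := by omega
    calc u sq ≤ (o + (P s0).1 + (lB - 1)) / Rj := Nat.div_le_div_right hle
      _ ≤ (o + (P s0).1) / Rj + (lB - 1) / Rj + 1 := nat_div_add_le _ _ _ hRj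
      _ = u s0 + DU := by rw [hDU]; ring
  have hvq : v sq ≤ v s0 + DV := by
    have h1' : (P sq).2 < lBbar := ((hmem _ (hPmem sq)).2).1
    have hle : o' + (P sq).2 ≤ o' + (P s0).2 + (lBbar - 1) := by omega
    calc v sq ≤ (o' + (P s0).2 + (lBbar - 1)) / Rk := Nat.div_le_div_right hle
      _ ≤ (o' + (P s0).2) / Rk + (lBbar - 1) / Rk + 1 := nat_div_add_le _ _ _ hRk
      _ = v s0 + DV := by rw [hDV]; ring
  -- N * q ≤ N * DU + DV
  have hNq : N * q ≤ N * DU + DV := by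
    have h3 : N * u sq ≤ N * (u s0 + DU) := Nat.mul_le_mul_left _ huq
    have h4 : N * (u s0 + DU) = N * u s0 + N * DU := by ring
    omega
  -- m ≤ (q+1) * Rk
  have hmq : m ≤ (q + 1) * Rk := by
    have hdm := Nat.div_add_mod (m - 1) Rk
    have hmod := Nat.mod_lt (m - 1) hRk
    have hqq : (q + 1) * Rk = Rk * q + Rk := by ring
    have hqr : Rk * ((m-1) / Rk) = Rk * q := by rw [hq]
    omega
  -- div-mult bounds
  have hDUR : DU * Rj ≤ lB + Rj := by
    have := Nat.div_mul_le_self (lB - 1) Rj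
    calc DU * Rj = ((lB - 1) / Rj) * Rj + Rj := by rw [hDU]; ring
      _ ≤ (lB - 1) + Rj := by omega
      _ ≤ lB + Rj := by omega
  have hDVR : DV * Rk ≤ lBbar + Rk := by
    have := Nat.div_mul_le_self (lBbar - 1) Rk
    calc DV * Rk = ((lBbar - 1) / Rk) * Rk + Rk := by rw [hDV]; ring
      _ ≤ (lBbar - 1) + Rk := by omega
      _ ≤ lBbar + Rk := by omega
  -- assemble
  have hA : N ^ 2 * m ≤ N ^ 2 * Rk * DU + N * (Rk * DV) + N ^ 2 * Rk := by
    calc N ^ 2 * m ≤ N ^ 2 * ((q + 1) * Rk) := Nat.mul_le_mul_left _ hmq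
      _ = N * Rk * (N * q) + N ^ 2 * Rk := by ring
      _ ≤ N * Rk * (N * DU + DV) + N ^ 2 * Rk := by
          have := Nat.mul_le_mul_left (N * Rk) hNq; omega
      _ = N ^ 2 * Rk * DU + N * (Rk * DV) + N ^ 2 * Rk := by ring
  have hB1 : N ^ 2 * Rk * DU ≤ lB + Rj := by
    calc N ^ 2 * Rk * DU = (Rk * N ^ 2) * DU := by ring
      _ ≤ Rj * DU := Nat.mul_le_mul_right _ h1
      _ = DU * Rj := by ring
      _ ≤ lB + Rj := hDUR
  have hB2 : N * (Rk * DV) ≤ N * lBbar + Rj := by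
    calc N * (Rk * DV) = N * (DV * Rk) := by ring
      _ ≤ N * (lBbar + Rk) := Nat.mul_le_mul_left _ hDVR
      _ = N * lBbar + N * Rk := by ring
      _ ≤ N * lBbar + Rj := by
          have hNle : N * Rk ≤ Rk * N ^ 2 := by
            calc N * Rk = Rk * N * 1 := by ring
              _ ≤ Rk * N * N := Nat.mul_le_mul_left _ (by omega)
              _ = Rk * N ^ 2 := by ring
          have : N * Rk ≤ Rj := le_trans hNle h1
          omega
  have hB3 : N ^ 2 * Rk ≤ Rj := by calc N ^ 2 * Rk = Rk * N ^ 2 := by ring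
                                      _ ≤ Rj := h1
  have h3Rj : 3 * Rj ≤ (N - 1) * lB := by
    have hN2 : 3 ≤ N ^ 2 := by
      calc 3 ≤ 2 * 2 := by omega
        _ ≤ N * N := Nat.mul_le_mul hN hN
        _ = N ^ 2 := by ring
    have : 3 * Rj ≤ N ^ 2 * Rj := Nat.mul_le_mul_right _ hN2
    have h2' : Rj * N ^ 2 = N ^ 2 * Rj := by ring
    have hlB : 3 * Rj ≤ lB := by omega
    calc 3 * Rj ≤ lB := hlB
      _ ≤ (N - 1) * lB := Nat.le_mul_of_pos_left _ (by omega)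
  calc N ^ 2 * m ≤ (lB + Rj) + (N * lBbar + Rj) + Rj := by omega
    _ = lB + 3 * Rj + N * lBbar := by ring
    _ ≤ lB + (N - 1) * lB + N * lBbar := by omega
    _ = (1 + (N - 1)) * lB + N * lBbar := by ring
    _ = N * lB + N * lBbar := by rw [show 1 + (N - 1) = N by omega]
    _ = N * (lB + lBbar) := by ring

lemma infix_getElem? {Γ : Type*} (B C sj tj : List Γ) (hCj : sj ++ B ++ tj = C)
    (i : ℕ) (hi : i < B.length) : C[sj.length + i]? = B[i]? := by
  rw [← hCj, List.append_assoc, List.getElem?_append_right (Nat.le_add_right _ _),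
    Nat.add_sub_cancel_left, List.getElem?_append_left hi]


/-- Strings of consecutive symbols from the blocks
`B_j = (a₁^{S·N^{2j}} ⋯ a_N^{S·N^{2j}})^{N^{2(M+1-j)}}` and
`B_k = (a₁^{T·N^{2k}} ⋯ a_N^{T·N^{2k}})^{N^{2(M+1-k)}}` with `j > k` are almost
as far apart in `f̄` as possible. -/
theorem stmt8 {Γ : Type*} (N : ℕ) (hN : 20 ≤ N) (a : Fin N → Γ) (ha : Function.Injective a)
    (M S T j k : ℕ) (hM : 0 < M) (hS : 0 < S) (hT : 0 < T) (hTS : T ≤ S)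
    (hk : 0 < k) (hkj : k < j) (hjM : j ≤ M)
    (B Bbar : List Γ)
    (hB : B <:+: cycleBlock N a (S * N ^ (2 * j)) (N ^ (2 * (M + 1 - j))))
    (hBbar : Bbar <:+: cycleBlock N a (T * N ^ (2 * k)) (N ^ (2 * (M + 1 - k))))
    (hBlen : S * N ^ (2 * M + 2) ≤ B.length) :
    fbar B Bbar > 1 - 4 / Real.sqrt N := by
  have hN0 : 0 < N := by omega
  set Rj := S * N ^ (2 * j) with hRjdef
  set Rk := T * N ^ (2 * k) with hRkdef
  have hRj0 : 0 < Rj := by positivity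
  have hRk0 : 0 < Rk := by positivity
  obtain ⟨sj, tj, hCj⟩ := hB
  obtain ⟨sk, tk, hCk⟩ := hBbar
  set o := sj.length with ho
  set o' := sk.length with ho'
  -- getElem formulas
  have hlenj : o + B.length ≤ N ^ (2 * (M + 1 - j)) * (N * Rj) := by
    rw [← cycleBlock_length N a Rj (N ^ (2 * (M + 1 - j))), ← hCj]
    simp; omega
  have hlenk : o' + Bbar.length ≤ N ^ (2 * (M + 1 - k)) * (N * Rk) := by
    rw [← cycleBlock_length N a Rk (N ^ (2 * (M + 1 - k))), ← hCk]
    simp; omega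
  have hBi : ∀ i, i < B.length → B[i]? = some (a ⟨(o + i) / Rj % N, Nat.mod_lt _ hN0⟩) := by
    intro i hi
    rw [← infix_getElem? B _ sj tj hCj i hi]
    exact cycleBlock_getElem? N a Rj _ hN0 hRj0 (o + i) (by omega)
  have hBbari : ∀ i, i < Bbar.length →
      Bbar[i]? = some (a ⟨(o' + i) / Rk % N, Nat.mod_lt _ hN0⟩) := by
    intro i hi
    rw [← infix_getElem? Bbar _ sk tk hCk i hi]
    exact cycleBlock_getElem? N a Rk _ hN0 hRk0 (o' + i) (by omega)
  -- arithmetic hypotheses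
  have hkey1 : Rk * N ^ 2 ≤ Rj := by
    calc Rk * N ^ 2 = T * N ^ (2 * k + 2) := by rw [hRkdef, mul_assoc, ← pow_add]
      _ ≤ S * N ^ (2 * j) := Nat.mul_le_mul hTS (Nat.pow_le_pow_right hN0 (by omega))
  have hkey2 : Rj * N ^ 2 ≤ B.length := by
    calc Rj * N ^ 2 = S * N ^ (2 * j + 2) := by rw [hRjdef, mul_assoc, ← pow_add]
      _ ≤ S * N ^ (2 * M + 2) := Nat.mul_le_mul_left _ (Nat.pow_le_pow_right hN0 (by omega))
      _ ≤ B.length := hBlen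
  -- bound on matches
  have hkey : ∀ r ∈ {r : ℕ | ∃ ML : List (ℕ × ℕ), IsMatch B Bbar ML ∧ ML.length = r},
      N ^ 2 * r ≤ N * (B.length + Bbar.length) := by
    rintro r ⟨ML, ⟨hchain, hmem⟩, rfl⟩
    haveI : IsTrans (ℕ × ℕ) (fun p q : ℕ × ℕ => p.1 < q.1 ∧ p.2 < q.2) :=
      ⟨fun a b c h1 h2 => ⟨h1.1.trans h2.1, h1.2.trans h2.2⟩⟩
    refine key_count N Rj Rk o o' B.length Bbar.length (by omega) hRk0 hkey1 hkey2 ML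
      (List.isChain_iff_pairwise.mp hchain) ?_
    intro p hp
    obtain ⟨hp1, hp2, hpe⟩ := hmem p hp
    refine ⟨hp1, hp2, ?_⟩
    rw [hBi p.1 hp1, hBbari p.2 hp2] at hpe
    have := ha (Option.some_injective _ hpe)
    exact congrArg Fin.val this
  -- the sup
  set sup : ℕ := sSup {r : ℕ | ∃ ML : List (ℕ × ℕ), IsMatch B Bbar ML ∧ ML.length = r} with hsup
  have hne : {r : ℕ | ∃ ML : List (ℕ × ℕ), IsMatch B Bbar ML ∧ ML.length = r}.Nonempty :=
    ⟨0, [], ⟨List.isChain_nil, by simp⟩, rfl⟩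
  have hsupb : sup ≤ N * (B.length + Bbar.length) / N ^ 2 := by
    refine csSup_le hne fun r hr => ?_
    rw [Nat.le_div_iff_mul_le (by positivity)]
    rw [mul_comm]
    exact hkey r hr
  have hsupN : sup * N ≤ B.length + Bbar.length := by
    have h1 : sup * N ^ 2 ≤ N * (B.length + Bbar.length) := by
      rw [← Nat.le_div_iff_mul_le (by positivity)]; exact hsupb
    have h2 : sup * N ^ 2 = N * (sup * N) := by ring
    rw [h2] at h1
    exact Nat.le_of_mul_le_mul_left h1 hN0
  -- real arithmetic
  have hfb : fbar B Bbar = 1 - 2 * (sup : ℝ) / ((B.length : ℝ) + (Bbar.length : ℝ)) := rfl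
  rw [hfb, gt_iff_lt, sub_lt_sub_iff_left]
  have hBpos : 0 < B.length := by
    have : 0 < S * N ^ (2 * M + 2) := by positivity
    omega
  have hLpos : (0 : ℝ) < (B.length : ℝ) + (Bbar.length : ℝ) := by
    have : (0 : ℝ) < (B.length : ℝ) := by exact_mod_cast hBpos
    have h2 : (0 : ℝ) ≤ (Bbar.length : ℝ) := by positivity
    linarith
  have hsupR : (sup : ℝ) * N ≤ (B.length : ℝ) + (Bbar.length : ℝ) := by exact_mod_cast hsupN
  have hNR : (20 : ℝ) ≤ (N : ℝ) := by exact_mod_cast hN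
  have hstep1 : 2 * (sup : ℝ) / ((B.length : ℝ) + (Bbar.length : ℝ)) ≤ 2 / N := by
    rw [div_le_div_iff₀ hLpos (by linarith)]
    nlinarith
  have hsq : (0 : ℝ) < Real.sqrt N := Real.sqrt_pos.mpr (by linarith)
  have hstep2 : (2 : ℝ) / N < 4 / Real.sqrt N := by
    rw [div_lt_div_iff₀ (by linarith) hsq]
    nlinarith [Real.sq_sqrt (show (0:ℝ) ≤ N by linarith), Real.sqrt_nonneg (N : ℝ),
      sq_nonneg (Real.sqrt N - 4)]
  linarith
end

section
/- Let 𝒯 ⊆ ℕ^{<ℕ} be a tree. Then the inverse limit group G_∞(𝒯) has a nonidentity element of odd parity if and only if 𝒯 is ill-founded (i.e., 𝒯 has an infinite branch). -/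
/-- A tree: a set of finite sequences of natural numbers closed under initial segments. -/
def IsTreeSet (T : Set (List ℕ)) : Prop := ∀ s ∈ T, ∀ t : List ℕ, t <+: s → t ∈ T

/-- A tree is ill-founded if it has an infinite branch. -/
def hasInfiniteBranch (T : Set (List ℕ)) : Prop :=
  ∃ f : ℕ → List ℕ, ∀ n : ℕ, f n ∈ T ∧ (f n).length = n ∧ f n <+: f (n + 1)

/-- The group of involutions `G_s(𝒯)`: the direct sum of copies of `ℤ/2ℤ` indexed by the
nodes of `𝒯` of length `s`; the canonical generators are the delta functions at nodes. -/
abbrev Gs (T : Set (List ℕ)) (s : ℕ) : Type :=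
  {t : List ℕ // t ∈ T ∧ t.length = s} →₀ ZMod 2

/-- The canonical homomorphism `ρ_{t,s} : G_t(𝒯) → G_s(𝒯)`, sending the generator at a
node `τ` of length `t` to the generator at its initial segment of length `s`. -/
noncomputable def rho (T : Set (List ℕ)) (hT : IsTreeSet T) {s t : ℕ} (hst : s ≤ t) :
    Gs T t → Gs T s :=
  Finsupp.mapDomain fun τ =>
    ⟨τ.1.take s, hT τ.1 τ.2.1 (τ.1.take s) (List.take_prefix s τ.1),
      by rw [List.length_take, τ.2.2]; exact min_eq_left hst⟩

/-- The parity of an element of a group of involutions: the sum (in `ℤ/2ℤ`) of its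
coordinates with respect to the canonical generators.  An element is odd when this is 1. -/
def parity {T : Set (List ℕ)} {s : ℕ} (g : Gs T s) : ZMod 2 :=
  g.sum fun _ v => v

theorem exists_chain {α : ℕ → Type*} (R : ∀ n, α n → α (n+1) → Prop) (a0 : α 0)
    (hstep : ∀ n a, ∃ b, R n a b) :
    ∃ F : ∀ n, α n, F 0 = a0 ∧ ∀ n, R n (F n) (F (n+1)) := by
  refine ⟨fun n => Nat.rec a0 (fun k a => (hstep k a).choose) n, rfl, fun n => ?_⟩
  exact (hstep n _).choose_spec

theorem prefix_take_eq {l p : List ℕ} (h : p <+: l) {n : ℕ} (hn : p.length = n) :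
    l.take n = p := by
  obtain ⟨r, rfl⟩ := h
  subst hn
  exact List.take_left

/-- `G_∞(𝒯)` has a nonidentity element of odd parity iff `𝒯` is ill-founded. -/
theorem stmt11 (T : Set (List ℕ)) (hT : IsTreeSet T) :
    (∃ g : (s : ℕ) → Gs T s,
      (∀ (s t : ℕ), 0 < s → ∀ hst : s ≤ t, rho T hT hst (g t) = g s) ∧
      (∃ s, 0 < s ∧ g s ≠ 0) ∧
      (∀ s, 0 < s → parity (g s) = 1)) ↔
    hasInfiniteBranch T := by
  constructor
  · rintro ⟨g, hcompat, -, hpar⟩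
    -- key step: a nonzero coordinate at level n extends to a nonzero coordinate at n+1
    have key : ∀ n, 0 < n → ∀ σ : {t : List ℕ // t ∈ T ∧ t.length = n}, g n σ ≠ 0 →
        ∃ τ : {t : List ℕ // t ∈ T ∧ t.length = n + 1},
          g (n + 1) τ ≠ 0 ∧ τ.1.take n = σ.1 := by
      intro n hn σ hσ
      have h := hcompat n (n + 1) hn (Nat.le_succ n)
      rw [← h] at hσ
      have hmem : σ ∈ (rho T hT (Nat.le_succ n) (g (n + 1))).support :=
        Finsupp.mem_support_iff.mpr hσ
      have hsub := Finsupp.mapDomain_support (f := fun τ : {t : List ℕ // t ∈ T ∧ t.length = n + 1} =>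
        (⟨τ.1.take n, hT τ.1 τ.2.1 (τ.1.take n) (List.take_prefix n τ.1),
          by rw [List.length_take, τ.2.2]; exact min_eq_left (Nat.le_succ n)⟩ :
            {t : List ℕ // t ∈ T ∧ t.length = n})) (s := g (n + 1))
      have := hsub hmem
      rw [Finset.mem_image] at this
      obtain ⟨τ, hτ, hτeq⟩ := this
      exact ⟨τ, Finsupp.mem_support_iff.mp hτ, congrArg Subtype.val hτeq⟩
    -- base: level 1 has a nonzero coordinate
    have h1 : g 1 ≠ 0 := by
      intro h0
      have := hpar 1 (by norm_num)
      rw [h0] at this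
      simp [parity] at this
    obtain ⟨σ0, hσ0⟩ := Finsupp.ne_iff.mp h1
    simp only [Finsupp.coe_zero, Pi.zero_apply] at hσ0
    obtain ⟨F, hF0, hFstep⟩ := exists_chain
      (α := fun n => {σ : {t : List ℕ // t ∈ T ∧ t.length = n + 1} // g (n + 1) σ ≠ 0})
      (R := fun n a b => b.1.1.take (n + 1) = a.1.1) ⟨σ0, hσ0⟩
      (fun n a => by
        obtain ⟨τ, hτ, hτtake⟩ := key (n + 1) (Nat.succ_pos n) a.1 a.2
        exact ⟨⟨τ, hτ⟩, hτtake⟩)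
    refine ⟨fun n => Nat.casesOn n [] (fun k => (F k).1.1), fun n => ?_⟩
    cases n with
    | zero =>
      refine ⟨hT (F 0).1.1 (F 0).1.2.1 [] List.nil_prefix, rfl, List.nil_prefix⟩
    | succ k =>
      refine ⟨(F k).1.2.1, (F k).1.2.2, ?_⟩
      show (F k).1.1 <+: (F (k + 1)).1.1
      rw [← hFstep k]
      exact List.take_prefix _ _
  · rintro ⟨f, hf⟩
    have hmem : ∀ n, f n ∈ T := fun n => (hf n).1
    have hlen : ∀ n, (f n).length = n := fun n => (hf n).2.1
    have hpre : ∀ s t, s ≤ t → f s <+: f t := by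
      intro s t hst
      induction t, hst using Nat.le_induction with
      | base => exact List.prefix_refl _
      | succ t hst ih => exact ih.trans (hf t).2.2
    refine ⟨fun s => Finsupp.single ⟨f s, hmem s, hlen s⟩ 1, ?_, ⟨1, one_pos, ?_⟩, ?_⟩
    · intro s t hs hst
      rw [rho, Finsupp.mapDomain_single]
      congr 1
      exact Subtype.ext (prefix_take_eq (hpre s t hst) (hlen s))
    · exact fun h => one_ne_zero (Finsupp.single_eq_zero.mp h)
    · intro s hs
      rw [parity, Finsupp.sum_single_index rfl]
end

section
/- Suppose a and b are strings of symbols of lengths n and m, respectively, from an alphabet Σ. Let h be a symbol not in Σ and β ≥ 1. Suppose ã and b̃ are strings obtained by inserting at most (β−1)·n copies of the symbol h into a and at most (β−1)·m copies of h into b. Then f̄(ã, b̃) ≥ f̄(a,b)/β. -/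
section aux

variable {α : Type*}

instance : IsTrans (ℕ × ℕ) (fun p q => p.1 < q.1 ∧ p.2 < q.2) :=
  ⟨fun _ _ _ h1 h2 => ⟨h1.1.trans h2.1, h1.2.trans h2.2⟩⟩

/-- `idxMap p l i` : position in `l.filter p` corresponding to position `i` in `l`. -/
def idxMap (p : α → Bool) (l : List α) (i : ℕ) : ℕ := ((l.take i).filter p).length

lemma idxMap_mono (p : α → Bool) (l : List α) {i j : ℕ} (hij : i ≤ j) :
    idxMap p l i ≤ idxMap p l j := by
  have h : l.take i = (l.take j).take i := by rw [List.take_take, min_eq_left hij]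
  unfold idxMap
  rw [h]
  exact ((List.take_sublist _ _).filter p).length_le

lemma idxMap_succ (p : α → Bool) (l : List α) {i : ℕ} (hi : i < l.length)
    (hpi : p l[i] = true) : idxMap p l (i + 1) = idxMap p l i + 1 := by
  unfold idxMap
  rw [List.take_succ, List.getElem?_eq_getElem hi]
  rw [List.filter_append, List.length_append]
  simp [List.filter_cons, hpi]

lemma idxMap_lt (p : α → Bool) (l : List α) {i j : ℕ} (hij : i < j) (hi : i < l.length)
    (hpi : p l[i] = true) : idxMap p l i < idxMap p l j := by
  have h1 := idxMap_mono p l (show i + 1 ≤ j from hij)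
  have h2 := idxMap_succ p l hi hpi
  omega

lemma idxMap_get (p : α → Bool) (l : List α) {i : ℕ} (hi : i < l.length)
    (hpi : p l[i] = true) :
    idxMap p l i < (l.filter p).length ∧ (l.filter p)[idxMap p l i]? = some l[i] := by
  have hd : l.filter p = (l.take i).filter p ++ l[i] :: (l.drop (i + 1)).filter p := by
    conv_lhs => rw [← List.take_append_drop i l]
    rw [List.filter_append, ← List.getElem_cons_drop hi, List.filter_cons_of_pos hpi]
  unfold idxMap
  rw [hd]
  refine ⟨by simp, ?_⟩
  rw [List.getElem?_append_right (le_refl _)]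
  simp

lemma length_le_of_pairwise_lt {l : List ℕ} (hl : l.Pairwise (· < ·)) {c : ℕ}
    (hc : ∀ x ∈ l, x < c) : l.length ≤ c := by
  have hnd : l.Nodup := hl.imp Nat.ne_of_lt
  have hsub : l.toFinset ⊆ Finset.range c := fun x hx =>
    Finset.mem_range.mpr (hc x (List.mem_toFinset.mp hx))
  have := Finset.card_le_card hsub
  rwa [List.toFinset_card_of_nodup hnd, Finset.card_range] at this

lemma length_le_count [DecidableEq α] (l : List α) (h : α) {I : List ℕ}
    (hI : I.Pairwise (· < ·)) (hmem : ∀ i ∈ I, l[i]? = some h) :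
    I.length ≤ l.count h := by
  set p : α → Bool := fun x => x == h with hp
  have hcnt : l.count h = (l.filter p).length := by
    simp [List.count, List.countP_eq_length_filter, hp]
  have key : ∀ i ∈ I, ∃ h1 : i < l.length, p (l[i]'h1) = true := by
    intro i hiI
    rcases List.getElem?_eq_some_iff.mp (hmem i hiI) with ⟨h1, h2⟩
    exact ⟨h1, by simp [hp, h2]⟩
  rw [hcnt]
  have hlen : (I.map (idxMap p l)).length = I.length := List.length_map _
  rw [← hlen]
  apply length_le_of_pairwise_lt
  · rw [List.pairwise_map]
    refine hI.imp_of_mem ?_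
    intro i j hiI hjI hij
    obtain ⟨h1, h2⟩ := key i hiI
    exact idxMap_lt p l hij h1 h2
  · intro x hx
    rcases List.mem_map.mp hx with ⟨i, hiI, rfl⟩
    obtain ⟨h1, h2⟩ := key i hiI
    exact (idxMap_get p l h1 h2).1

lemma isMatch_pairwise {a b : List α} {M : List (ℕ × ℕ)} (hM : IsMatch a b M) :
    M.Pairwise (fun p q => p.1 < q.1 ∧ p.2 < q.2) :=
  List.isChain_iff_pairwise.mp hM.1

lemma isMatch_length_le_left {a b : List α} {M : List (ℕ × ℕ)} (hM : IsMatch a b M) :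
    M.length ≤ a.length := by
  have hP := (isMatch_pairwise hM).imp (fun h => h.1)
  rw [← List.length_map Prod.fst]
  apply length_le_of_pairwise_lt (List.pairwise_map.mpr hP)
  intro x hx
  rcases List.mem_map.mp hx with ⟨q, hq, rfl⟩
  exact (hM.2 q hq).1

lemma isMatch_length_le_right {a b : List α} {M : List (ℕ × ℕ)} (hM : IsMatch a b M) :
    M.length ≤ b.length := by
  have hP := (isMatch_pairwise hM).imp (fun h => h.2)
  rw [← List.length_map Prod.snd]
  apply length_le_of_pairwise_lt (List.pairwise_map.mpr hP)
  intro x hx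
  rcases List.mem_map.mp hx with ⟨q, hq, rfl⟩
  exact (hM.2 q hq).2.1

lemma length_filter_ne_add_count [DecidableEq α] (l : List α) (h : α) :
    (l.filter (fun x => decide (x ≠ h))).length + l.count h = l.length := by
  induction l with
  | nil => simp
  | cons x xs ih =>
    by_cases hx : x = h <;>
      simp [List.filter_cons, List.count_cons, hx] at ih ⊢ <;> omega

/-- Key combinatorial lemma: a match between padded strings gives a match between
the originals losing at most the `h`-counts. -/
lemma key_match [DecidableEq α] (atil btil : List α) (h : α) {M : List (ℕ × ℕ)}
    (hM : IsMatch atil btil M) :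
    ∃ M' : List (ℕ × ℕ),
      IsMatch (atil.filter (fun x => decide (x ≠ h))) (btil.filter (fun x => decide (x ≠ h))) M' ∧
      2 * M.length ≤ 2 * M'.length + atil.count h + btil.count h := by
  classical
  set p : α → Bool := fun x => decide (x ≠ h) with hp
  set g : ℕ × ℕ → Bool := fun q => decide (atil[q.1]? ≠ some h) with hg
  have hPW := isMatch_pairwise hM
  -- basic facts about members of M
  have hmem : ∀ q ∈ M, q.1 < atil.length ∧ q.2 < btil.length ∧ atil[q.1]? = btil[q.2]? :=
    hM.2
  -- facts for the non-h part
  have hgood : ∀ q ∈ M, g q = true →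
      ∃ (h1 : q.1 < atil.length) (h2 : q.2 < btil.length),
        p atil[q.1] = true ∧ p btil[q.2] = true ∧ atil[q.1] = btil[q.2] := by
    intro q hq hgq
    obtain ⟨h1, h2, h3⟩ := hmem q hq
    refine ⟨h1, h2, ?_⟩
    have hne : atil[q.1]? ≠ some h := by simpa [hg] using hgq
    have heq : atil[q.1] = btil[q.2] := by
      have := h3
      rw [List.getElem?_eq_getElem h1, List.getElem?_eq_getElem h2] at this
      exact Option.some.inj this
    have hne' : atil[q.1] ≠ h := by
      intro hcon
      exact hne (by rw [List.getElem?_eq_getElem h1, hcon])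
    exact ⟨by simp [hp, hne'], by simp [hp, ← heq, hne'], heq⟩
  refine ⟨(M.filter g).map (fun q => (idxMap p atil q.1, idxMap p btil q.2)), ⟨?_, ?_⟩, ?_⟩
  · -- Chain'
    rw [List.Chain', List.isChain_iff_pairwise, List.pairwise_map]
    refine ((hPW.filter g).imp_of_mem ?_)
    intro q q' hq hq' hlt
    have hq0 := List.mem_of_mem_filter hq
    have hgq := List.of_mem_filter hq
    obtain ⟨h1, h2, hpa, hpb, _⟩ := hgood q hq0 hgq
    exact ⟨idxMap_lt p atil hlt.1 h1 hpa, idxMap_lt p btil hlt.2 h2 hpb⟩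
  · -- membership conditions
    intro q' hq'
    rcases List.mem_map.mp hq' with ⟨q, hq, rfl⟩
    have hq0 := List.mem_of_mem_filter hq
    have hgq := List.of_mem_filter hq
    obtain ⟨h1, h2, hpa, hpb, heq⟩ := hgood q hq0 hgq
    obtain ⟨ba1, ba2⟩ := idxMap_get p atil h1 hpa
    obtain ⟨bb1, bb2⟩ := idxMap_get p btil h2 hpb
    exact ⟨ba1, bb1, by rw [ba2, bb2, heq]⟩
  · -- counting
    have hsplit : M.length = (M.filter g).length + (M.filter (fun q => !g q)).length := by
      rw [← List.countP_eq_length_filter, ← List.countP_eq_length_filter]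
      have := (List.length_eq_countP_add_countP g : M.length = _)
      rw [this]
      congr 1
      apply List.countP_congr
      intro q _
      cases g q <;> simp
    rw [List.length_map]
    -- bound the h-part by the counts
    set Mh := M.filter (fun q => !g q) with hMh
    have hMhPW : Mh.Pairwise (fun q q' => q.1 < q'.1 ∧ q.2 < q'.2) := hPW.filter _
    have hMhmem : ∀ q ∈ Mh, atil[q.1]? = some h ∧ btil[q.2]? = some h := by
      intro q hq
      have hq0 := List.mem_of_mem_filter hq
      have hgq := List.of_mem_filter hq
      have hae : atil[q.1]? = some h := by
        by_contra hcon
        simp [hg, hcon] at hgq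
      exact ⟨hae, by rw [← (hmem q hq0).2.2]; exact hae⟩
    have hcA : Mh.length ≤ atil.count h := by
      rw [← List.length_map Prod.fst]
      apply length_le_count atil h
      · exact List.pairwise_map.mpr (hMhPW.imp (fun h => h.1))
      · intro i hi
        rcases List.mem_map.mp hi with ⟨q, hq, rfl⟩
        exact (hMhmem q hq).1
    have hcB : Mh.length ≤ btil.count h := by
      rw [← List.length_map Prod.snd]
      apply length_le_count btil h
      · exact List.pairwise_map.mpr (hMhPW.imp (fun h => h.2))
      · intro i hi
        rcases List.mem_map.mp hi with ⟨q, hq, rfl⟩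
        exact (hMhmem q hq).2
    omega

lemma isMatch_nil (a b : List α) : IsMatch a b [] := ⟨List.isChain_nil, by simp⟩

lemma matchSet_nonempty (a b : List α) :
    {r : ℕ | ∃ M : List (ℕ × ℕ), IsMatch a b M ∧ M.length = r}.Nonempty :=
  ⟨0, [], isMatch_nil a b, rfl⟩

lemma matchSet_bddAbove (a b : List α) :
    BddAbove {r : ℕ | ∃ M : List (ℕ × ℕ), IsMatch a b M ∧ M.length = r} := by
  refine ⟨a.length, fun r hr => ?_⟩
  rcases hr with ⟨M, hM, rfl⟩
  exact isMatch_length_le_left hM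

end aux

/-- Inserting copies of a fresh symbol `h`, at most `(β-1)·n` into `a` and at most
`(β-1)·m` into `b`, decreases the `f̄` distance by a factor of at most `β`. -/
theorem stmt18 {α' : Type*} [DecidableEq α'] (a b : List α') (h : α')
    (ha : h ∉ a) (hb : h ∉ b) (β : ℝ) (hβ : 1 ≤ β)
    (atil btil : List α')
    (hfa : atil.filter (fun x => decide (x ≠ h)) = a)
    (hfb : btil.filter (fun x => decide (x ≠ h)) = b)
    (hca : ((atil.count h : ℕ) : ℝ) ≤ (β - 1) * a.length)
    (hcb : ((btil.count h : ℕ) : ℝ) ≤ (β - 1) * b.length) :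
    fbar atil btil ≥ fbar a b / β := by
  have hβ0 : (0 : ℝ) < β := lt_of_lt_of_le one_pos hβ
  by_cases h0 : a.length + b.length = 0
  · -- degenerate case: everything empty
    have ha0 : a = [] := by
      cases a with
      | nil => rfl
      | cons x xs => simp at h0
    have hb0 : b = [] := by
      cases b with
      | nil => rfl
      | cons x xs => simp at h0
    subst ha0; subst hb0
    have hca0 : atil.count h = 0 := by
      have : ((atil.count h : ℕ) : ℝ) ≤ 0 := by simpa using hca
      exact_mod_cast le_antisymm this (by positivity)
    have hcb0 : btil.count h = 0 := by
      have : ((btil.count h : ℕ) : ℝ) ≤ 0 := by simpa using hcb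
      exact_mod_cast le_antisymm this (by positivity)
    have hat : atil = [] := by
      have hlen := length_filter_ne_add_count atil h
      rw [hfa, hca0] at hlen
      simpa using (List.length_eq_zero_iff.mp (by simpa using hlen.symm))
    have hbt : btil = [] := by
      have hlen := length_filter_ne_add_count btil h
      rw [hfb, hcb0] at hlen
      simpa using (List.length_eq_zero_iff.mp (by simpa using hlen.symm))
    subst hat; subst hbt
    have hfb1 : fbar ([] : List α') ([] : List α') = 1 := by
      simp [fbar]
    rw [hfb1, ge_iff_le, div_le_one hβ0]
    exact hβ
  · -- main case
    set n : ℕ := a.length with hn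
    set m : ℕ := b.length with hm
    set ca : ℕ := atil.count h with hca'
    set cb : ℕ := btil.count h with hcb'
    have hna : atil.length = n + ca := by
      have := length_filter_ne_add_count atil h
      rw [hfa] at this
      omega
    have hmb : btil.length = m + cb := by
      have := length_filter_ne_add_count btil h
      rw [hfb] at this
      omega
    set Sa : ℕ := sSup {r : ℕ | ∃ M : List (ℕ × ℕ), IsMatch a b M ∧ M.length = r} with hSa
    set St : ℕ := sSup {r : ℕ | ∃ M : List (ℕ × ℕ), IsMatch atil btil M ∧ M.length = r}
      with hSt
    -- Sa ≤ n, Sa ≤ m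
    have hSan : Sa ≤ n := csSup_le (matchSet_nonempty a b)
      (by rintro r ⟨M, hM, rfl⟩; exact isMatch_length_le_left hM)
    have hSam : Sa ≤ m := csSup_le (matchSet_nonempty a b)
      (by rintro r ⟨M, hM, rfl⟩; exact isMatch_length_le_right hM)
    -- the sup for tilded strings is attained
    obtain ⟨Mt, hMt, hMtlen⟩ :=
      Nat.sSup_mem (matchSet_nonempty atil btil) (matchSet_bddAbove atil btil)
    obtain ⟨M', hM', hbound⟩ := key_match atil btil h hMt
    rw [hfa, hfb] at hM'
    have hM'le : M'.length ≤ Sa :=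
      le_csSup (matchSet_bddAbove a b) ⟨M', hM', rfl⟩
    rw [← hSt] at hMtlen
    have hkey : 2 * St ≤ 2 * Sa + ca + cb := by
      rw [← hMtlen]
      omega
    -- now real arithmetic
    have h0' : 0 < n + m := Nat.pos_of_ne_zero h0
    have hnm : (0 : ℝ) < (n : ℝ) + m := by exact_mod_cast h0'
    have hkeyR : (2 : ℝ) * St ≤ 2 * Sa + ca + cb := by exact_mod_cast hkey
    have hSaR : (2 : ℝ) * Sa ≤ (n : ℝ) + m := by exact_mod_cast (by omega : 2 * Sa ≤ n + m)
    have hcaR : (0 : ℝ) ≤ (ca : ℝ) := Nat.cast_nonneg _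
    have hcbR : (0 : ℝ) ≤ (cb : ℝ) := Nat.cast_nonneg _
    have hD : (0 : ℝ) < ((n : ℝ) + ca) + ((m : ℝ) + cb) := by linarith
    have hDle : ((n : ℝ) + ca) + ((m : ℝ) + cb) ≤ β * ((n : ℝ) + m) := by nlinarith
    have e1 : fbar a b = 1 - 2 * (Sa : ℝ) / ((n : ℝ) + m) := by
      rw [fbar, ← hSa, ← hn, ← hm]
    have e2 : fbar atil btil =
        (((n : ℝ) + ca) + ((m : ℝ) + cb) - 2 * St) / (((n : ℝ) + ca) + ((m : ℝ) + cb)) := by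
      rw [fbar, ← hSt, hna, hmb]
      push_cast
      field_simp
    rw [ge_iff_le, e1, e2]
    have e3 : (1 - 2 * (Sa : ℝ) / ((n : ℝ) + m)) / β =
        ((n : ℝ) + m - 2 * Sa) / (β * ((n : ℝ) + m)) := by
      rw [one_sub_div (ne_of_gt hnm), div_div, mul_comm ((n : ℝ) + ↑m) β]
    rw [e3]
    apply div_le_div₀ (by linarith) (by linarith) hD hDle
end

section
/- Suppose a and b are strings of symbols of lengths n and m, respectively, from an alphabet Σ, and 0 < γ < 1. If ã and b̃ are strings obtained by deleting at most ⌊γ(n+m)⌋ terms from a and b altogether, then f̄(a,b) ≥ f̄(ã,b̃) − 2γ. Moreover, if there exists a best possible match between a and b (one realizing the supremum in the definition of f̄) in which no term deleted from a and b to form ã and b̃ is matched with a non-deleted term, then f̄(a,b) ≥ f̄(ã,b̃) − γ; likewise, if ã and b̃ are obtained by adding at most ⌊γ(n+m)⌋ symbols to a and b, then f̄(a,b) ≥ f̄(ã,b̃) − γ. -/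
/-- The string obtained from `a` by deleting the terms whose positions lie in `D`. -/
def removeIdxs {α : Type*} (a : List α) (D : Finset ℕ) : List α :=
  ((List.range a.length).filter (fun i => decide (i ∉ D))).filterMap (fun i => a[i]?)

open List

private instance auxTrans : IsTrans (ℕ × ℕ) (fun p q : ℕ × ℕ => p.1 < q.1 ∧ p.2 < q.2) :=
  ⟨fun _ _ _ h1 h2 => ⟨h1.1.trans h2.1, h1.2.trans h2.2⟩⟩

private lemma aux_filterMap_length {α β : Type*} {f : α → Option β} :
    ∀ {l : List α}, (∀ x ∈ l, (f x).isSome) → (l.filterMap f).length = l.length := by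
  intro l
  induction l with
  | nil => simp
  | cons x t ih =>
    intro h
    obtain ⟨y, hy⟩ := Option.isSome_iff_exists.mp (h x mem_cons_self)
    rw [filterMap_cons, hy]
    simp only [length_cons]
    rw [ih (fun z hz => h z (mem_cons_of_mem _ hz))]

private lemma aux_range_filterMap {α : Type*} (a : List α) :
    (List.range a.length).filterMap (fun i => a[i]?) = a := by
  induction a using List.reverseRecOn with
  | nil => simp
  | append_singleton as x ih =>
    rw [length_append, length_singleton, range_succ, filterMap_append]
    have h1 : (List.range as.length).filterMap (fun i => (as ++ [x])[i]?) =
        (List.range as.length).filterMap (fun i => as[i]?) := by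
      apply filterMap_congr
      intro i hi
      rw [mem_range] at hi
      exact getElem?_append_left hi
    rw [h1, ih]
    simp

private lemma aux_sorted_sublist_range {l : List ℕ} {n : ℕ} (hp : l.Pairwise (· < ·))
    (hb : ∀ x ∈ l, x < n) : l <+ List.range n := by
  have hnd : l.Nodup := hp.imp (fun h => Nat.ne_of_lt h)
  have heq : l = (List.range n).filter (fun x => decide (x ∈ l)) := by
    apply List.Perm.eq_of_pairwise (fun a b _ _ h1 h2 => absurd (h1.trans h2) (lt_irrefl _)) hp ((pairwise_lt_range).filter _)
    apply (List.perm_ext_iff_of_nodup hnd ((nodup_range (n := n)).filter _)).mpr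
    intro x
    simp only [mem_filter, mem_range, decide_eq_true_eq]
    exact ⟨fun h => ⟨hb x h, h⟩, fun h => h.2⟩
  rw [heq]
  exact (filter_sublist)

private lemma aux_pairwise_zip {β γ : Type*} {r₁ : β → β → Prop} {r₂ : γ → γ → Prop} :
    ∀ {l₁ : List β} {l₂ : List γ}, l₁.Pairwise r₁ → l₂.Pairwise r₂ →
      (l₁.zip l₂).Pairwise (fun p q => r₁ p.1 q.1 ∧ r₂ p.2 q.2) := by
  intro l₁
  induction l₁ with
  | nil => intro l₂ _ _; simp
  | cons x t ih =>
    intro l₂ h₁ h₂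
    cases l₂ with
    | nil => simp
    | cons y s =>
      obtain ⟨hx, h₁'⟩ := pairwise_cons.mp h₁
      obtain ⟨hy, h₂'⟩ := pairwise_cons.mp h₂
      rw [zip_cons_cons, pairwise_cons]
      refine ⟨fun p hp => ?_, ih h₁' h₂'⟩
      obtain ⟨hp1, hp2⟩ := of_mem_zip hp
      exact ⟨hx _ hp1, hy _ hp2⟩

/-- The set of lengths of common sublists. -/
private def Sset {α : Type*} (a b : List α) : Set ℕ :=
  {r : ℕ | ∃ c : List α, c.Sublist a ∧ c.Sublist b ∧ c.length = r}

private lemma aux_match_to_sublist {α : Type*} {a b : List α} {M : List (ℕ × ℕ)}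
    (hM : IsMatch a b M) : ∃ c : List α, c.Sublist a ∧ c.Sublist b ∧ c.length = M.length := by
  obtain ⟨hch, hmem⟩ := hM
  have hpw : M.Pairwise (fun p q => p.1 < q.1 ∧ p.2 < q.2) := isChain_iff_pairwise.mp hch
  have hpw1 : (M.map Prod.fst).Pairwise (· < ·) := (pairwise_map.mpr (hpw.imp fun h => h.1))
  have hpw2 : (M.map Prod.snd).Pairwise (· < ·) := (pairwise_map.mpr (hpw.imp fun h => h.2))
  refine ⟨(M.map Prod.fst).filterMap (fun i => a[i]?), ?_, ?_, ?_⟩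
  · have := ((aux_sorted_sublist_range hpw1 (by
      intro x hx; obtain ⟨p, hp, rfl⟩ := mem_map.mp hx
      exact (hmem p hp).1)).filterMap (fun i => a[i]?))
    rwa [aux_range_filterMap] at this
  · have heq : (M.map Prod.fst).filterMap (fun i => a[i]?) =
        (M.map Prod.snd).filterMap (fun j => b[j]?) := by
      rw [filterMap_map, filterMap_map]
      exact filterMap_congr (fun p hp => (hmem p hp).2.2)
    rw [heq]
    have := ((aux_sorted_sublist_range hpw2 (by
      intro x hx; obtain ⟨p, hp, rfl⟩ := mem_map.mp hx
      exact (hmem p hp).2.1)).filterMap (fun j => b[j]?))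
    rwa [aux_range_filterMap] at this
  · rw [aux_filterMap_length, length_map]
    intro x hx
    obtain ⟨p, hp, rfl⟩ := mem_map.mp hx
    simp [getElem?_eq_getElem (hmem p hp).1]

private lemma aux_sublist_to_match {α : Type*} {a b cs : List α}
    (hca : cs.Sublist a) (hcb : cs.Sublist b) :
    ∃ M : List (ℕ × ℕ), IsMatch a b M ∧ M.length = cs.length := by
  obtain ⟨is, his, hips⟩ := sublist_eq_map_getElem hca
  obtain ⟨js, hjs, hjps⟩ := sublist_eq_map_getElem hcb
  have hislen : is.length = cs.length := by rw [his, length_map]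
  have hjslen : js.length = cs.length := by rw [hjs, length_map]
  refine ⟨(is.map Fin.val).zip (js.map Fin.val), ⟨?_, ?_⟩, ?_⟩
  · apply List.Pairwise.isChain
    have := aux_pairwise_zip (pairwise_map.mpr (hips.imp fun h => (Fin.lt_def.mp h)))
      (pairwise_map.mpr (hjps.imp fun h => (Fin.lt_def.mp h)))
    exact this
  · intro p hp
    rw [mem_iff_getElem] at hp
    obtain ⟨k, hk, hkp⟩ := hp
    have hk1 : k < (is.map Fin.val).length := lt_of_lt_of_le hk (by
      rw [length_zip]; exact Nat.min_le_left _ _)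
    have hk2 : k < (js.map Fin.val).length := lt_of_lt_of_le hk (by
      rw [length_zip]; exact Nat.min_le_right _ _)
    rw [getElem_zip] at hkp
    have hki : k < is.length := by rwa [length_map] at hk1
    have hkj : k < js.length := by rwa [length_map] at hk2
    obtain ⟨i0, hi0⟩ : ∃ i0 : Fin a.length, is[k]'hki = i0 := ⟨_, rfl⟩
    obtain ⟨j0, hj0⟩ : ∃ j0 : Fin b.length, js[k]'hkj = j0 := ⟨_, rfl⟩
    have hp1 : p.1 = i0.val := by
      rw [← hkp]; simp [← hi0]
    have hp2 : p.2 = j0.val := by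
      rw [← hkp]; simp [← hj0]
    have hkc : k < cs.length := by rwa [hislen] at hki
    have hc1 : cs[k]? = some a[i0] := by
      rw [his, getElem?_map, getElem?_eq_getElem hki, Option.map_some, hi0]
    have hc2 : cs[k]? = some b[j0] := by
      rw [hjs, getElem?_map, getElem?_eq_getElem hkj, Option.map_some, hj0]
    refine ⟨hp1 ▸ i0.isLt, hp2 ▸ j0.isLt, ?_⟩
    rw [hp1, hp2, getElem?_eq_getElem i0.isLt, getElem?_eq_getElem j0.isLt]
    exact congrArg some (Option.some.inj (hc1.symm.trans hc2))
  · simp [length_zip, hislen, hjslen]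

private lemma aux_set_eq {α : Type*} (a b : List α) :
    {r : ℕ | ∃ M : List (ℕ × ℕ), IsMatch a b M ∧ M.length = r} = Sset a b := by
  ext r
  constructor
  · rintro ⟨M, hM, rfl⟩
    obtain ⟨c, h1, h2, h3⟩ := aux_match_to_sublist hM
    exact ⟨c, h1, h2, h3⟩
  · rintro ⟨c, h1, h2, rfl⟩
    obtain ⟨M, hM, h3⟩ := aux_sublist_to_match h1 h2
    exact ⟨M, hM, h3⟩

private noncomputable def sm {α : Type*} (a b : List α) : ℕ := sSup (Sset a b)

private lemma aux_bdd {α : Type*} (a b : List α) : BddAbove (Sset a b) :=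
  ⟨a.length, fun r hr => by obtain ⟨c, h1, _, h3⟩ := hr; exact h3 ▸ h1.length_le⟩

private lemma aux_nonempty {α : Type*} (a b : List α) : (Sset a b).Nonempty :=
  ⟨0, [], nil_sublist a, nil_sublist b, rfl⟩

private lemma sm_mem {α : Type*} (a b : List α) : sm a b ∈ Sset a b :=
  Nat.sSup_mem (aux_nonempty a b) (aux_bdd a b)

private lemma le_sm {α : Type*} {a b c : List α} (h1 : c.Sublist a) (h2 : c.Sublist b) :
    c.length ≤ sm a b :=
  le_csSup (aux_bdd a b) ⟨c, h1, h2, rfl⟩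

private lemma sm_le_left {α : Type*} (a b : List α) : sm a b ≤ a.length := by
  obtain ⟨c, h1, _, h3⟩ := sm_mem a b; exact h3 ▸ h1.length_le

private lemma sm_le_right {α : Type*} (a b : List α) : sm a b ≤ b.length := by
  obtain ⟨c, _, h2, h3⟩ := sm_mem a b; exact h3 ▸ h2.length_le

private lemma two_sm_le {α : Type*} (a b : List α) : 2 * sm a b ≤ a.length + b.length := by
  have := sm_le_left a b; have := sm_le_right a b; omega

private lemma fbar_eq {α : Type*} (a b : List α) :
    fbar a b = 1 - 2 * ((sm a b : ℕ) : ℝ) / (((a.length + b.length : ℕ) : ℝ)) := by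
  rw [fbar, aux_set_eq]
  push_cast
  rfl

private lemma real_key {s st N Nt : ℕ} {ε : ℝ} (hε : 0 ≤ ε) (hNt : Nt ≤ N)
    (h2st : 2 * st ≤ Nt) (hk : 2 * (s : ℝ) ≤ 2 * (st : ℝ) + ε * (N : ℝ)) :
    1 - 2 * (s : ℝ) / ((N : ℕ) : ℝ) ≥ 1 - 2 * (st : ℝ) / ((Nt : ℕ) : ℝ) - ε := by
  rcases Nat.eq_zero_or_pos Nt with h0 | hpos
  · have hst : st = 0 := by omega
    subst h0; subst hst
    simp only [Nat.cast_zero, mul_zero, zero_div, sub_zero, zero_add] at *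
    rcases Nat.eq_zero_or_pos N with hN0 | hNpos
    · subst hN0
      simp only [Nat.cast_zero, mul_zero] at hk
      have : (s : ℝ) ≤ 0 := by linarith
      have hs0 : (s : ℝ) = 0 := le_antisymm this (by positivity)
      rw [hs0]; simp; linarith
    · have hNR : (0 : ℝ) < N := by exact_mod_cast hNpos
      have : 2 * (s : ℝ) / N ≤ ε := by
        rw [div_le_iff₀ hNR]; linarith
      linarith
  · have hNposn : 0 < N := lt_of_lt_of_le hpos hNt
    have hNR : (0 : ℝ) < N := by exact_mod_cast hNposn
    have hNtR : (0 : ℝ) < Nt := by exact_mod_cast hpos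
    have h1 : 2 * (s : ℝ) / N ≤ (2 * (st : ℝ) + ε * N) / N := by
      gcongr
    have h2 : (2 * (st : ℝ) + ε * N) / N = 2 * (st : ℝ) / N + ε := by
      field_simp
    have h3 : 2 * (st : ℝ) / N ≤ 2 * (st : ℝ) / Nt := by
      apply div_le_div_of_nonneg_left (by positivity) hNtR
      exact_mod_cast hNt
    linarith

private lemma real_key3 {s st N Nt : ℕ} {γ : ℝ} (hγ : 0 ≤ γ) (hN : N ≤ Nt) (hs : s ≤ st)
    (h2st : 2 * st ≤ Nt) (hd : (Nt : ℝ) ≤ N + γ * N) :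
    1 - 2 * (s : ℝ) / ((N : ℕ) : ℝ) ≥ 1 - 2 * (st : ℝ) / ((Nt : ℕ) : ℝ) - γ := by
  rcases Nat.eq_zero_or_pos N with h0 | hpos
  · subst h0
    simp only [Nat.cast_zero, mul_zero, add_zero, zero_add] at hd
    have hNt0 : Nt = 0 := by exact_mod_cast le_antisymm (by exact_mod_cast hd) (Nat.zero_le _)
    have : st = 0 := by omega
    have : s = 0 := by omega
    subst hNt0; simp_all
  · have hNR : (0 : ℝ) < N := by exact_mod_cast hpos
    have hNtR : (0 : ℝ) < Nt := by exact_mod_cast lt_of_lt_of_le hpos hN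
    have hsR : (s : ℝ) ≤ st := by exact_mod_cast hs
    have h2stR : 2 * (st : ℝ) ≤ Nt := by exact_mod_cast h2st
    have key : 2 * (s : ℝ) / N ≤ 2 * (st : ℝ) / Nt + γ := by
      rw [div_add' _ _ _ (ne_of_gt hNtR), div_le_div_iff₀ hNR hNtR]
      nlinarith [mul_le_mul_of_nonneg_left hd (by positivity : (0:ℝ) ≤ 2 * (st:ℝ)),
        mul_nonneg (mul_nonneg hγ hNR.le) (sub_nonneg.mpr h2stR),
        mul_le_mul_of_nonneg_right hsR (le_of_lt hNtR)]
    linarith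

private lemma aux_inter {α : Type*} :
    ∀ (a c d : List α), c.Sublist a → d.Sublist a →
      ∃ e : List α, e.Sublist c ∧ e.Sublist d ∧
        c.length + d.length ≤ a.length + e.length := by
  intro a
  induction a with
  | nil =>
    intro c d hc hd
    rw [sublist_nil] at hc hd
    subst hc; subst hd
    exact ⟨[], Sublist.refl _, Sublist.refl _, by simp⟩
  | cons x t ih =>
    intro c d hc hd
    cases hc with
    | cons _ hc' =>
      cases hd with
      | cons _ hd' =>
        obtain ⟨e, h1, h2, h3⟩ := ih c d hc' hd'
        exact ⟨e, h1, h2, by simp; omega⟩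
      | cons_cons _ hd' =>
        obtain ⟨e, h1, h2, h3⟩ := ih c _ hc' hd'
        exact ⟨e, h1, h2.trans (sublist_cons_self x _), by simp at *; omega⟩
    | cons_cons _ hc' =>
      cases hd with
      | cons _ hd' =>
        obtain ⟨e, h1, h2, h3⟩ := ih _ d hc' hd'
        exact ⟨e, h1.trans (sublist_cons_self x _), h2, by simp at *; omega⟩
      | cons_cons _ hd' =>
        obtain ⟨e, h1, h2, h3⟩ := ih _ _ hc' hd'
        exact ⟨x :: e, h1.cons₂ x, h2.cons₂ x, by simp at *; omega⟩

theorem stmt19 {α' : Type*} (a b : List α') (γ : ℝ) (hγ0 : 0 < γ) (hγ1 : γ < 1) :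
    -- deleting at most ⌊γ(n+m)⌋ terms altogether
    (∀ atil btil : List α', List.Sublist atil a → List.Sublist btil b →
      (a.length - atil.length) + (b.length - btil.length) ≤
        ⌊γ * ((a.length : ℝ) + (b.length : ℝ))⌋₊ →
      fbar a b ≥ fbar atil btil - 2 * γ) ∧
    -- if the deleted terms are only matched to each other in some best possible match
    (∀ Da Db : Finset ℕ,
      ((Da.filter (fun i => i < a.length)).card + (Db.filter (fun j => j < b.length)).card ≤
        ⌊γ * ((a.length : ℝ) + (b.length : ℝ))⌋₊) →
      (∃ M : List (ℕ × ℕ), IsMatch a b M ∧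
        M.length = sSup {r : ℕ | ∃ M' : List (ℕ × ℕ), IsMatch a b M' ∧ M'.length = r} ∧
        ∀ p ∈ M, (p.1 ∈ Da ↔ p.2 ∈ Db)) →
      fbar a b ≥ fbar (removeIdxs a Da) (removeIdxs b Db) - γ) ∧
    -- adding at most ⌊γ(n+m)⌋ symbols altogether
    (∀ atil btil : List α', List.Sublist a atil → List.Sublist b btil →
      (atil.length - a.length) + (btil.length - b.length) ≤
        ⌊γ * ((a.length : ℝ) + (b.length : ℝ))⌋₊ →
      fbar a b ≥ fbar atil btil - γ) := by
  have hfl : ((⌊γ * ((a.length : ℝ) + (b.length : ℝ))⌋₊ : ℕ) : ℝ) ≤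
      γ * ((a.length : ℝ) + (b.length : ℝ)) := Nat.floor_le (by positivity)
  refine ⟨?_, ?_, ?_⟩
  · -- Part 1
    intro atil btil hsa hsb hd
    rw [fbar_eq, fbar_eq]
    have hna : atil.length ≤ a.length := hsa.length_le
    have hnb : btil.length ≤ b.length := hsb.length_le
    obtain ⟨c, hca, hcb, hclen⟩ := sm_mem a b
    obtain ⟨e1, he1c, he1a, h1len⟩ := aux_inter a c atil hca hsa
    obtain ⟨e2, he2e1, he2b, h2len⟩ := aux_inter b e1 btil (he1c.trans hcb) hsb
    have hst : e2.length ≤ sm atil btil := le_sm (he2e1.trans he1a) he2b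
    have hnat : sm a b + atil.length + btil.length ≤
        a.length + b.length + sm atil btil := by omega
    apply real_key (by linarith : (0:ℝ) ≤ 2 * γ) (by omega) (two_sm_le atil btil)
    have hdR : ((a.length : ℝ) + b.length) - atil.length - btil.length ≤
        γ * ((a.length : ℝ) + b.length) := by
      have := (Nat.cast_le (α := ℝ)).mpr hd
      push_cast [Nat.cast_sub hna, Nat.cast_sub hnb] at this
      linarith
    have hnatR : (sm a b : ℝ) + atil.length + btil.length ≤
        (a.length : ℝ) + b.length + sm atil btil := by exact_mod_cast hnat
    push_cast
    linarith
  · -- Part 2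
    intro Da Db hcard hM'
    obtain ⟨M, hM, hlen, hmix⟩ := hM'
    rw [fbar_eq, fbar_eq]
    have hsM : M.length = sm a b := by
      rw [hlen]; unfold sm; rw [aux_set_eq]
    have hpw : M.Pairwise (fun p q => p.1 < q.1 ∧ p.2 < q.2) := isChain_iff_pairwise.mp hM.1
    set M' := M.filter (fun p => decide (p.1 ∉ Da)) with hM'def
    set drop := M.filter (fun p => !(decide (p.1 ∉ Da))) with hdropdef
    have hsplit : M.length = M'.length + drop.length := length_eq_length_filter_add _
    -- bound on drop
    have hdroppw : drop.Pairwise (fun p q => p.1 < q.1 ∧ p.2 < q.2) :=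
      hpw.sublist (filter_sublist (l := M))
    have hdropmem : ∀ p ∈ drop, p ∈ M := fun p hp => mem_of_mem_filter hp
    have hdropDa : ∀ p ∈ drop, p.1 ∈ Da := by
      intro p hp
      have := of_mem_filter hp
      simpa using this
    have hk1 : drop.length ≤ (Da.filter (fun i => i < a.length)).card := by
      have hnd : (drop.map Prod.fst).Nodup :=
        (pairwise_map.mpr (hdroppw.imp fun h => h.1)).imp (fun h => Nat.ne_of_lt h)
      have hsub : (drop.map Prod.fst).toFinset ⊆ Da.filter (fun i => i < a.length) := by
        intro x hx
        rw [List.mem_toFinset, mem_map] at hx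
        obtain ⟨p, hp, rfl⟩ := hx
        exact Finset.mem_filter.mpr ⟨hdropDa p hp, (hM.2 p (hdropmem p hp)).1⟩
      calc drop.length = (drop.map Prod.fst).length := (length_map _).symm
        _ = (drop.map Prod.fst).toFinset.card := (List.toFinset_card_of_nodup hnd).symm
        _ ≤ _ := Finset.card_le_card hsub
    have hk2 : drop.length ≤ (Db.filter (fun j => j < b.length)).card := by
      have hnd : (drop.map Prod.snd).Nodup :=
        (pairwise_map.mpr (hdroppw.imp fun h => h.2)).imp (fun h => Nat.ne_of_lt h)
      have hsub : (drop.map Prod.snd).toFinset ⊆ Db.filter (fun j => j < b.length) := by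
        intro x hx
        rw [List.mem_toFinset, mem_map] at hx
        obtain ⟨p, hp, rfl⟩ := hx
        refine Finset.mem_filter.mpr ⟨(hmix p (hdropmem p hp)).mp (hdropDa p hp),
          (hM.2 p (hdropmem p hp)).2.1⟩
      calc drop.length = (drop.map Prod.snd).length := (length_map _).symm
        _ = (drop.map Prod.snd).toFinset.card := (List.toFinset_card_of_nodup hnd).symm
        _ ≤ _ := Finset.card_le_card hsub
    -- build common sublist from M'
    have hM'pw : M'.Pairwise (fun p q => p.1 < q.1 ∧ p.2 < q.2) :=
      hpw.sublist (filter_sublist (l := M))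
    have hM'mem : ∀ p ∈ M', p ∈ M := fun p hp => mem_of_mem_filter hp
    have hM'Da : ∀ p ∈ M', p.1 ∉ Da := by
      intro p hp
      have := of_mem_filter hp
      simpa using this
    have hM'Db : ∀ p ∈ M', p.2 ∉ Db := by
      intro p hp hcon
      exact hM'Da p hp ((hmix p (hM'mem p hp)).mpr hcon)
    have hsubla : (M'.map Prod.fst) <+
        (List.range a.length).filter (fun i => decide (i ∉ Da)) := by
      have hpw1 : (M'.map Prod.fst).Pairwise (· < ·) :=
        pairwise_map.mpr (hM'pw.imp fun h => h.1)
      have h1 : (M'.map Prod.fst) <+ List.range a.length := by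
        apply aux_sorted_sublist_range hpw1
        intro x hx
        obtain ⟨p, hp, rfl⟩ := mem_map.mp hx
        exact (hM.2 p (hM'mem p hp)).1
      have h2 : (M'.map Prod.fst).filter (fun i => decide (i ∉ Da)) = M'.map Prod.fst := by
        apply filter_eq_self.mpr
        intro x hx
        obtain ⟨p, hp, rfl⟩ := mem_map.mp hx
        simpa using hM'Da p hp
      rw [← h2]
      exact h1.filter _
    have hsublb : (M'.map Prod.snd) <+
        (List.range b.length).filter (fun j => decide (j ∉ Db)) := by
      have hpw2 : (M'.map Prod.snd).Pairwise (· < ·) :=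
        pairwise_map.mpr (hM'pw.imp fun h => h.2)
      have h1 : (M'.map Prod.snd) <+ List.range b.length := by
        apply aux_sorted_sublist_range hpw2
        intro x hx
        obtain ⟨p, hp, rfl⟩ := mem_map.mp hx
        exact (hM.2 p (hM'mem p hp)).2.1
      have h2 : (M'.map Prod.snd).filter (fun j => decide (j ∉ Db)) = M'.map Prod.snd := by
        apply filter_eq_self.mpr
        intro x hx
        obtain ⟨p, hp, rfl⟩ := mem_map.mp hx
        simpa using hM'Db p hp
      rw [← h2]
      exact h1.filter _
    have hc'a : (M'.map Prod.fst).filterMap (fun i => a[i]?) <+ removeIdxs a Da :=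
      hsubla.filterMap _
    have hc'eq : (M'.map Prod.fst).filterMap (fun i => a[i]?) =
        (M'.map Prod.snd).filterMap (fun j => b[j]?) := by
      rw [filterMap_map, filterMap_map]
      exact filterMap_congr (fun p hp => (hM.2 p (hM'mem p hp)).2.2)
    have hc'b : (M'.map Prod.fst).filterMap (fun i => a[i]?) <+ removeIdxs b Db := by
      rw [hc'eq]
      exact hsublb.filterMap _
    have hc'len : ((M'.map Prod.fst).filterMap (fun i => a[i]?)).length = M'.length := by
      rw [aux_filterMap_length, length_map]
      intro x hx
      obtain ⟨p, hp, rfl⟩ := mem_map.mp hx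
      simp [getElem?_eq_getElem (hM.2 p (hM'mem p hp)).1]
    have hst : M'.length ≤ sm (removeIdxs a Da) (removeIdxs b Db) := by
      rw [← hc'len]
      exact le_sm hc'a hc'b
    -- lengths of the reduced strings
    have hlena : (removeIdxs a Da).length ≤ a.length := by
      apply le_trans (length_filterMap_le _ _)
      apply le_trans (length_filter_le _ _)
      simp
    have hlenb : (removeIdxs b Db).length ≤ b.length := by
      apply le_trans (length_filterMap_le _ _)
      apply le_trans (length_filter_le _ _)
      simp
    apply real_key hγ0.le (by omega) (two_sm_le _ _)
    have hnat : sm a b ≤ sm (removeIdxs a Da) (removeIdxs b Db) + drop.length := by omega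
    have h2k : 2 * drop.length ≤ ⌊γ * ((a.length : ℝ) + (b.length : ℝ))⌋₊ := by omega
    have h2kR : 2 * (drop.length : ℝ) ≤ γ * ((a.length : ℝ) + (b.length : ℝ)) := by
      calc 2 * (drop.length : ℝ) = ((2 * drop.length : ℕ) : ℝ) := by push_cast; ring
        _ ≤ _ := le_trans ((Nat.cast_le (α := ℝ)).mpr h2k) hfl
    have hnatR : (sm a b : ℝ) ≤
        (sm (removeIdxs a Da) (removeIdxs b Db) : ℝ) + drop.length := by exact_mod_cast hnat
    push_cast
    linarith
  · -- Part 3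
    intro atil btil hsa hsb hd
    rw [fbar_eq, fbar_eq]
    have hna : a.length ≤ atil.length := hsa.length_le
    have hnb : b.length ≤ btil.length := hsb.length_le
    have hs : sm a b ≤ sm atil btil := by
      obtain ⟨c, h1, h2, h3⟩ := sm_mem a b
      exact h3 ▸ le_sm (h1.trans hsa) (h2.trans hsb)
    apply real_key3 hγ0.le (by omega) hs (two_sm_le _ _)
    have hdR : ((atil.length : ℝ) + btil.length) - a.length - b.length ≤
        γ * ((a.length : ℝ) + b.length) := by
      have := (Nat.cast_le (α := ℝ)).mpr hd
      push_cast [Nat.cast_sub hna, Nat.cast_sub hnb] at this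
      linarith
    push_cast
    linarith
end
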